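/- arXiv:2106.16202 — 3 statements merged into one kernel-verified Lean document; each statement's English description precedes it below -/
import Mathlib

section
/- Let Q be a cube in ℝⁿ, η ∈ (0,1), and let F ⊂ D(Q) be an η-sparse family of dyadic subcubes of Q. Then for every α > 0, the measure of the set {x ∈ Q : ∑_{P ∈ F} χ_P(x) > α} is at most (1/(1-η)) · e^{-α·log(1/(1-η))} · |Q|. -/
/-!
A point outside `Ω_N` lies in at most `N` cubes of the family, because the generations are
pairwise disjoint and the unions `Ω_k` decrease; so the superlevel set at height `α` is contained
in `Ω_⌊α⌋₊`. Sparseness makes each `Ω_{k+1}` fill at most a fraction `1 - η` of every cube of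
generation `k`, whence `|Ω_k| ≤ (1 - η)^k |Q|`, and `(1 - η)^⌊α⌋₊ ≤ (1 - η)^(α - 1)` is the
claimed constant.
-/

open MeasureTheory ENNReal Filter

/-- An axis-parallel cube in `ℝⁿ`, given by its lower-left corner and (positive) side length. -/
structure DyCube (n : ℕ) where
  corner : Fin n → ℝ
  side : ℝ
  side_pos : 0 < side

namespace DyCube

/-- The set of points of a cube (half-open, so that dyadic children tile it exactly). -/
def set {n : ℕ} (Q : DyCube n) : Set (Fin n → ℝ) :=
  Set.univ.pi fun i => Set.Ico (Q.corner i) (Q.corner i + Q.side)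

/-- `P.IsDyadicSub Q` : `P` is a dyadic subcube of `Q`, obtained by `k` successive
dyadic subdivisions of `Q`. -/
def IsDyadicSub {n : ℕ} (P Q : DyCube n) : Prop :=
  ∃ k : ℕ, ∃ m : Fin n → ℕ, (∀ i, m i < 2 ^ k) ∧ P.side = Q.side / 2 ^ k ∧
    ∀ i, P.corner i = Q.corner i + m i * (Q.side / 2 ^ k)

end DyCube

/-- `Ω_k`, the union of the cubes of the `k`-th generation of a family. -/
def genUnion {n : ℕ} (F : ℕ → Set (DyCube n)) (k : ℕ) : Set (Fin n → ℝ) :=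
  ⋃ P ∈ F k, P.set

/-- A contracting family of dyadic subcubes of `Q`: generations `F k` of pairwise disjoint
dyadic subcubes, starting from `F 0 = {Q}`, with decreasing unions whose measures tend to `0`. -/
structure ContractingFamily {n : ℕ} (Q : DyCube n) (F : ℕ → Set (DyCube n)) : Prop where
  zero : F 0 = {Q}
  dyadic : ∀ k, ∀ P ∈ F k, P.IsDyadicSub Q
  disj : ∀ k, (F k).PairwiseDisjoint DyCube.set
  nested : ∀ k, genUnion F (k + 1) ⊆ genUnion F k
  vanish : Tendsto (fun k => volume (genUnion F k)) atTop (nhds 0)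

/-- An `η`-sparse family: a contracting family such that each cube `P ∈ F k` satisfies
`|E_P| ≥ η |P|`, where `E_P = P \ Ω_{k+1}`. -/
def IsSparseFamily {n : ℕ} (η : ℝ) (Q : DyCube n) (F : ℕ → Set (DyCube n)) : Prop :=
  ContractingFamily Q F ∧
    ∀ k, ∀ P ∈ F k, ENNReal.ofReal η * volume P.set ≤ volume (P.set \ genUnion F (k + 1))

theorem natCast_floor_le_ofReal (a : ℝ) : (⌊a⌋₊ : ℝ≥0∞) ≤ ENNReal.ofReal a := by
  rcases le_or_gt 0 a with ha | ha
  · rw [← ENNReal.ofReal_natCast]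
    exact ENNReal.ofReal_le_ofReal (Nat.floor_le ha)
  · simp [Nat.floor_of_nonpos ha.le]

theorem Real.inv_mul_exp_neg_log_inv_mul {x : ℝ} (hx : 0 < x) (a : ℝ) :
    x⁻¹ * Real.exp (-Real.log x⁻¹ * a) = x ^ (a - 1) := by
  rw [Real.log_inv, neg_neg, Real.rpow_sub hx, Real.rpow_one, Real.rpow_def_of_pos hx]
  ring

theorem Set.tsum_indicator_of_pairwiseDisjoint {ι α M : Type*} [AddCommMonoid M]
    [TopologicalSpace M] {S : Set ι} {s : ι → Set α} (hd : S.PairwiseDisjoint s)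
    (f : α → M) (x : α) :
    ∑' i : S, (s i).indicator f x = (⋃ i ∈ S, s i).indicator f x := by
  by_cases hx : x ∈ ⋃ i ∈ S, s i
  · obtain ⟨i, hi, hxi⟩ := Set.mem_iUnion₂.mp hx
    rw [Set.indicator_of_mem hx, tsum_eq_single ⟨i, hi⟩, Set.indicator_of_mem hxi]
    rintro ⟨j, hj⟩ hji
    refine Set.indicator_of_notMem (fun hxj => hji ?_) f
    exact Subtype.ext (hd.elim hj hi (Set.not_disjoint_iff.mpr ⟨x, hxj, hxi⟩))
  · rw [Set.indicator_of_notMem hx]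
    refine (tsum_congr fun ⟨i, hi⟩ => Set.indicator_of_notMem ?_ f).trans tsum_zero
    exact fun hxi => hx (Set.mem_iUnion₂.mpr ⟨i, hi, hxi⟩)

theorem Antitone.tsum_indicator_one_le {α : Type*} {Ω : ℕ → Set α} (hΩ : Antitone Ω)
    {N : ℕ} {x : α} (hx : x ∉ Ω N) :
    ∑' k, (Ω k).indicator (fun _ => (1 : ℝ≥0∞)) x ≤ N := by
  calc ∑' k, (Ω k).indicator (fun _ => (1 : ℝ≥0∞)) x
      = ∑ k ∈ Finset.range N, (Ω k).indicator (fun _ => (1 : ℝ≥0∞)) x := by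
        refine tsum_eq_sum fun k hk => Set.indicator_of_notMem (fun hxk => hx ?_) _
        exact hΩ (by simpa using hk) hxk
    _ ≤ ∑ _k ∈ Finset.range N, (1 : ℝ≥0∞) :=
        Finset.sum_le_sum fun k _ => Set.indicator_apply_le fun _ => le_rfl
    _ = N := by simp

theorem MeasureTheory.measure_inter_le_of_mul_le_measure_diff {α : Type*} [MeasurableSpace α]
    {μ : Measure α} {s t : Set α} {c : ℝ≥0∞} (ht : MeasurableSet t) (hs : μ s ≠ ∞)
    (h : c * μ s ≤ μ (s \ t)) : μ (s ∩ t) ≤ (1 - c) * μ s := by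
  have hdiff : μ (s \ t) ≠ ∞ := ne_top_of_le_ne_top hs (measure_mono Set.sdiff_subset)
  calc μ (s ∩ t) = μ s - μ (s \ t) :=
        ENNReal.eq_sub_of_add_eq hdiff (measure_inter_add_sdiff s ht)
    _ ≤ μ s - c * μ s := tsub_le_tsub_left h _
    _ = (1 - c) * μ s := by rw [ENNReal.sub_mul fun _ _ => hs, one_mul]

theorem MeasureTheory.measure_le_mul_tsum_of_mul_le_measure_diff {ι α : Type*} [Countable ι]
    [MeasurableSpace α] {μ : Measure α} {s : ι → Set α} {t : Set α} {c : ℝ≥0∞}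
    (ht : MeasurableSet t) (hts : t ⊆ ⋃ i, s i) (hs : ∀ i, μ (s i) ≠ ∞)
    (h : ∀ i, c * μ (s i) ≤ μ (s i \ t)) : μ t ≤ (1 - c) * ∑' i, μ (s i) := by
  calc μ t = μ (⋃ i, s i ∩ t) := by rw [← Set.iUnion_inter, Set.inter_eq_right.mpr hts]
    _ ≤ ∑' i, μ (s i ∩ t) := measure_iUnion_le _
    _ ≤ ∑' i, (1 - c) * μ (s i) := ENNReal.tsum_le_tsum fun i =>
        measure_inter_le_of_mul_le_measure_diff ht (hs i) (h i)
    _ = (1 - c) * ∑' i, μ (s i) := ENNReal.tsum_mul_left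

namespace DyCube

variable {n : ℕ}

theorem measurableSet_set (P : DyCube n) : MeasurableSet P.set :=
  MeasurableSet.univ_pi fun _ => measurableSet_Ico

theorem volume_set_ne_top (P : DyCube n) : volume P.set ≠ ∞ := by
  rw [DyCube.set, volume_pi_pi]
  exact (ENNReal.prod_lt_top fun i _ => by simp [Real.volume_Ico]).ne

theorem countable_setOf_isDyadicSub (Q : DyCube n) :
    {P : DyCube n | P.IsDyadicSub Q}.Countable := by
  let child : ℕ × (Fin n → ℕ) → DyCube n := fun km =>
    ⟨fun i => Q.corner i + km.2 i * (Q.side / 2 ^ km.1), Q.side / 2 ^ km.1,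
      div_pos Q.side_pos (by positivity)⟩
  refine (Set.countable_range child).mono ?_
  rintro ⟨corner, side, _⟩ ⟨k, m, -, hside, hcorner⟩
  obtain rfl : side = Q.side / 2 ^ k := hside
  obtain rfl : corner = _ := funext hcorner
  exact ⟨(k, m), rfl⟩

end DyCube

namespace ContractingFamily

variable {n : ℕ} {Q : DyCube n} {F : ℕ → Set (DyCube n)}

theorem countable (hF : ContractingFamily Q F) (k : ℕ) : (F k).Countable :=
  (DyCube.countable_setOf_isDyadicSub Q).mono (hF.dyadic k)

theorem measurableSet_genUnion (hF : ContractingFamily Q F) (k : ℕ) :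
    MeasurableSet (genUnion F k) :=
  .biUnion (hF.countable k) fun P _ => P.measurableSet_set

theorem volume_genUnion (hF : ContractingFamily Q F) (k : ℕ) :
    volume (genUnion F k) = ∑' P : F k, volume (P : DyCube n).set :=
  measure_biUnion (hF.countable k) (hF.disj k) fun P _ => P.measurableSet_set

theorem tsum_tsum_indicator_le (hF : ContractingFamily Q F) {N : ℕ} {x : Fin n → ℝ}
    (hx : x ∉ genUnion F N) :
    ∑' k, ∑' P : F k, (P : DyCube n).set.indicator (fun _ => (1 : ℝ≥0∞)) x ≤ N := by
  simp only [Set.tsum_indicator_of_pairwiseDisjoint (hF.disj _)]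
  exact (antitone_nat_of_succ_le hF.nested).tsum_indicator_one_le hx

end ContractingFamily

namespace IsSparseFamily

variable {n : ℕ} {η : ℝ} {Q : DyCube n} {F : ℕ → Set (DyCube n)}

theorem volume_genUnion_succ_le (hF : IsSparseFamily η Q F) (k : ℕ) :
    volume (genUnion F (k + 1)) ≤ (1 - ENNReal.ofReal η) * volume (genUnion F k) := by
  have := (hF.1.countable k).to_subtype
  rw [hF.1.volume_genUnion k]
  refine measure_le_mul_tsum_of_mul_le_measure_diff (hF.1.measurableSet_genUnion _) ?_
    (fun P => P.1.volume_set_ne_top) (fun P => hF.2 k P P.2)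
  rw [Set.iUnion_subtype]
  exact hF.1.nested k

theorem volume_genUnion_le (hF : IsSparseFamily η Q F) (k : ℕ) :
    volume (genUnion F k) ≤ (1 - ENNReal.ofReal η) ^ k * volume Q.set := by
  induction k with
  | zero => simp [genUnion, hF.1.zero]
  | succ k ih =>
    calc volume (genUnion F (k + 1))
        ≤ (1 - ENNReal.ofReal η) * volume (genUnion F k) := hF.volume_genUnion_succ_le k
      _ ≤ (1 - ENNReal.ofReal η) * ((1 - ENNReal.ofReal η) ^ k * volume Q.set) := by gcongr
      _ = (1 - ENNReal.ofReal η) ^ (k + 1) * volume Q.set := by ring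

end IsSparseFamily

theorem stmt2_general {n : ℕ} (Q : DyCube n) (η : ℝ) (hη : η ∈ Set.Ioo (0 : ℝ) 1)
    (F : ℕ → Set (DyCube n)) (hF : IsSparseFamily η Q F) (α : ℝ) :
    volume {x | x ∈ Q.set ∧ ENNReal.ofReal α <
        ∑' k : ℕ, ∑' P : F k, (P : DyCube n).set.indicator (fun _ => (1 : ℝ≥0∞)) x} ≤
      ENNReal.ofReal ((1 - η)⁻¹ * Real.exp (-(Real.log (1 - η)⁻¹) * α)) * volume Q.set := by
  set N := ⌊α⌋₊
  have hsub : {x | x ∈ Q.set ∧ ENNReal.ofReal α <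
      ∑' k : ℕ, ∑' P : F k, (P : DyCube n).set.indicator (fun _ => (1 : ℝ≥0∞)) x}
      ⊆ genUnion F N := by
    rintro x ⟨-, hx⟩
    by_contra hxN
    exact (hx.trans_le ((hF.1.tsum_tsum_indicator_le hxN).trans
      (natCast_floor_le_ofReal α))).false
  have hpow : (1 - η) ^ N ≤ (1 - η) ^ (α - 1) := by
    rw [← Real.rpow_natCast]
    exact Real.rpow_le_rpow_of_exponent_ge (by linarith [hη.2]) (by linarith [hη.1])
      (by linarith [Nat.lt_floor_add_one α])
  calc _ ≤ volume (genUnion F N) := measure_mono hsub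
    _ ≤ (1 - ENNReal.ofReal η) ^ N * volume Q.set := hF.volume_genUnion_le N
    _ = ENNReal.ofReal ((1 - η) ^ N) * volume Q.set := by
        rw [ENNReal.ofReal_pow (by linarith [hη.2]), ENNReal.ofReal_sub _ hη.1.le,
          ENNReal.ofReal_one]
    _ ≤ _ := by
        rw [Real.inv_mul_exp_neg_log_inv_mul (by linarith [hη.2])]
        gcongr

/-- Distribution estimate for the overlap function of an `η`-sparse family:
`|{x ∈ Q : ∑_{P ∈ F} χ_P(x) > α}| ≤ (1/(1-η)) e^{-α log(1/(1-η))} |Q|`. -/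
theorem stmt2 {n : ℕ} (Q : DyCube n) (η : ℝ) (hη : η ∈ Set.Ioo (0 : ℝ) 1)
    (F : ℕ → Set (DyCube n)) (hF : IsSparseFamily η Q F) (α : ℝ) (hα : 0 < α) :
    volume {x | x ∈ Q.set ∧ ENNReal.ofReal α <
        ∑' k : ℕ, ∑' P : F k, (P : DyCube n).set.indicator (fun _ => (1 : ℝ≥0∞)) x} ≤
      ENNReal.ofReal ((1 - η)⁻¹ * Real.exp (-(Real.log (1 - η)⁻¹) * α)) * volume Q.set :=
  stmt2_general Q η hη F hF α
end

section
/- Let r ∈ (0, ∞), and let {f_Q, f_{P,Q}} satisfy the ℓ^r-condition with constant C_r and the compatibility condition |f_{P,Q}| ≤ |f_P| + |f_Q|. Then for any cube Q ⊂ ℝⁿ and η ∈ (0,1), there exists an η-sparse family F ⊂ D(Q) such that for a.e. x ∈ Q: |f_Q(x)| ≲ C_r (∑_{P ∈ F} γ_P^r χ_P(x))^{1/r}, where γ_P = (f_P χ_P)*(|P|(1−η)/2^{n+2}) + (m_P^♯ f)*(|P|(1−η)/2^{n+2}) and g* denotes the nonincreasing rearrangement. -/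
open MeasureTheory ENNReal Filter

/-- The `ℓ^r`-condition for a family `{f_Q, f_{P,Q}}` (here `g P Q = f_{P,Q}`) with constant `C`:
for every cube `Q` and every nested chain `c 0 ⊇ c 1 ⊇ ⋯ ⊇ c m` of dyadic subcubes of `Q`,
a.e. on `c m` one has `|f_{c 0}| ≤ C (∑_{k<m} |f_{c (k+1), c k}|^r + |f_{c m}|^r)^{1/r}`. -/
def LrCondition {n : ℕ} (r C : ℝ) (f : DyCube n → (Fin n → ℝ) → ℝ)
    (g : DyCube n → DyCube n → (Fin n → ℝ) → ℝ) : Prop :=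
  ∀ (Q : DyCube n) (m : ℕ) (c : ℕ → DyCube n),
    (c 0).IsDyadicSub Q → (∀ k < m, (c (k + 1)).IsDyadicSub (c k)) →
    ∀ᵐ x ∂volume, x ∈ (c m).set →
      |f (c 0) x| ≤
        C * ((∑ k ∈ Finset.range m, |g (c (k + 1)) (c k) x| ^ r) + |f (c m) x| ^ r) ^ (1 / r)

/-- The nonincreasing rearrangement of an `ℝ≥0∞`-valued function with respect to a measure. -/
noncomputable def rearrE {α : Type*} [MeasurableSpace α] (μ : Measure α) (g : α → ℝ≥0∞)
    (t : ℝ≥0∞) : ℝ≥0∞ :=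
  sInf {a : ℝ≥0∞ | μ {x | a < g x} ≤ t}

/-- The (essential) oscillation of `g` on a set `S`:
`osc(g;S) = esssup_{x',x'' ∈ S} |g(x') − g(x'')|`. -/
noncomputable def oscE {n : ℕ} (g : (Fin n → ℝ) → ℝ) (S : Set (Fin n → ℝ)) : ℝ≥0∞ :=
  essSup (fun p : (Fin n → ℝ) × (Fin n → ℝ) => ENNReal.ofReal |g p.1 - g p.2|)
    ((volume.restrict S).prod (volume.restrict S))

/-- The sharp maximal function `m_Q^♯ f (x) = sup_{P ∈ D(Q), x ∈ P} osc (f_{P,Q}; P)`,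
where `g P Q = f_{P,Q}`. -/
noncomputable def sharpM {n : ℕ} (g : DyCube n → DyCube n → (Fin n → ℝ) → ℝ) (Q : DyCube n)
    (x : Fin n → ℝ) : ℝ≥0∞ :=
  ⨆ P : {P : DyCube n // P.IsDyadicSub Q ∧ x ∈ P.set}, oscE (g (P : DyCube n) Q) (P : DyCube n).set

/-- `γ_P = (f_P χ_P)^*(|P|(1−η)/2^{n+2}) + (m_P^♯ f)^*(|P|(1−η)/2^{n+2})`. -/
noncomputable def gammaP {n : ℕ} (f : DyCube n → (Fin n → ℝ) → ℝ)
    (g : DyCube n → DyCube n → (Fin n → ℝ) → ℝ) (η : ℝ) (P : DyCube n) : ℝ≥0∞ :=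
  rearrE volume (fun y => P.set.indicator (fun z => ENNReal.ofReal |f P z|) y)
      (volume P.set * ENNReal.ofReal ((1 - η) / 2 ^ (n + 2))) +
    rearrE volume (sharpM g P) (volume P.set * ENNReal.ofReal ((1 - η) / 2 ^ (n + 2)))

namespace SparseAux

theorem DyCube.ext' {n} {P R : DyCube n} (hc : P.corner = R.corner) (hs : P.side = R.side) :
    P = R := by cases P; cases R; simp_all

/-- The dyadic subcube of `Q` with data `(k, m)`. -/
noncomputable def dmk {n : ℕ} (Q : DyCube n) (k : ℕ) (m : Fin n → ℕ) : DyCube n :=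
  ⟨fun i => Q.corner i + m i * (Q.side / 2 ^ k), Q.side / 2 ^ k, by
    have := Q.side_pos; positivity⟩

theorem isDyadicSub_iff {n} {P Q : DyCube n} :
    P.IsDyadicSub Q ↔ ∃ k m, (∀ i, m i < 2 ^ k) ∧ P = dmk Q k m := by
  constructor
  · rintro ⟨k, m, hb, hs, hc⟩
    exact ⟨k, m, hb, DyCube.ext' (funext fun i => hc i) hs⟩
  · rintro ⟨k, m, hb, rfl⟩
    exact ⟨k, m, hb, rfl, fun i => rfl⟩

theorem dmk_self {n} (Q : DyCube n) : dmk Q 0 (fun _ => 0) = Q := by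
  apply DyCube.ext' (funext fun i => ?_) (by simp [dmk])
  simp [dmk]

theorem isDyadicSub_refl {n} (Q : DyCube n) : Q.IsDyadicSub Q :=
  isDyadicSub_iff.2 ⟨0, fun _ => 0, by simp, (dmk_self Q).symm⟩

theorem dmk_dmk {n} (Q : DyCube n) (k₁ k₂ : ℕ) (m₁ m₂ : Fin n → ℕ) :
    dmk (dmk Q k₁ m₁) k₂ m₂ = dmk Q (k₁ + k₂) (fun i => m₁ i * 2 ^ k₂ + m₂ i) := by
  have hside : (dmk (dmk Q k₁ m₁) k₂ m₂).side = (dmk Q (k₁ + k₂) fun i => m₁ i * 2 ^ k₂ + m₂ i).side := by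
    show Q.side / 2 ^ k₁ / 2 ^ k₂ = Q.side / 2 ^ (k₁ + k₂)
    rw [div_div, ← pow_add]
  refine DyCube.ext' (funext fun i => ?_) hside
  show Q.corner i + m₁ i * (Q.side / 2 ^ k₁) + m₂ i * (Q.side / 2 ^ k₁ / 2 ^ k₂)
      = Q.corner i + (↑(m₁ i * 2 ^ k₂ + m₂ i)) * (Q.side / 2 ^ (k₁ + k₂))
  push_cast
  rw [pow_add]
  field_simp
  ring

theorem isDyadicSub_trans {n} {P R Q : DyCube n} (h₁ : P.IsDyadicSub R)
    (h₂ : R.IsDyadicSub Q) : P.IsDyadicSub Q := by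
  rw [isDyadicSub_iff] at *
  obtain ⟨k₂, m₂, hb₂, rfl⟩ := h₁
  obtain ⟨k₁, m₁, hb₁, rfl⟩ := h₂
  refine ⟨k₁ + k₂, fun i => m₁ i * 2 ^ k₂ + m₂ i, fun i => ?_, dmk_dmk ..⟩
  calc m₁ i * 2 ^ k₂ + m₂ i < (m₁ i + 1) * 2 ^ k₂ := by have := hb₂ i; nlinarith
  _ ≤ 2 ^ k₁ * 2 ^ k₂ := Nat.mul_le_mul_right _ (by have := hb₁ i; omega)
  _ = 2 ^ (k₁ + k₂) := (pow_add 2 k₁ k₂).symm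

theorem mem_dmk_iff {n} {Q : DyCube n} {k : ℕ} {m : Fin n → ℕ} {x : Fin n → ℝ} :
    x ∈ (dmk Q k m).set ↔ ∀ i, (m i : ℝ) * (Q.side / 2 ^ k) ≤ x i - Q.corner i ∧
      x i - Q.corner i < ((m i : ℝ) + 1) * (Q.side / 2 ^ k) := by
  simp only [DyCube.set, Set.mem_pi, Set.mem_univ, forall_true_left, Set.mem_Ico, dmk]
  refine forall_congr' fun i => ?_
  constructor <;> rintro ⟨h₁, h₂⟩ <;> constructor <;> nlinarith [h₁, h₂]

theorem interval_floor {v ℓ : ℝ} (hℓ : 0 < ℓ) (m : ℕ) :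
    ((m : ℝ) * ℓ ≤ v ∧ v < ((m : ℝ) + 1) * ℓ) ↔ (0 ≤ v ∧ ⌊v / ℓ⌋₊ = m) := by
  have h0 : (0:ℝ) ≤ (m:ℝ) * ℓ := by positivity
  constructor
  · rintro ⟨h₁, h₂⟩
    refine ⟨le_trans h0 h₁, ?_⟩
    rw [Nat.floor_eq_iff (div_nonneg (le_trans h0 h₁) hℓ.le), le_div_iff₀ hℓ, div_lt_iff₀ hℓ]
    exact ⟨h₁, h₂⟩
  · rintro ⟨h₀, h₁⟩
    rw [Nat.floor_eq_iff (div_nonneg h₀ hℓ.le), le_div_iff₀ hℓ, div_lt_iff₀ hℓ] at h₁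
    exact h₁

theorem mem_dmk_iff_floor {n} {Q : DyCube n} {k : ℕ} {m : Fin n → ℕ} {x : Fin n → ℝ} :
    x ∈ (dmk Q k m).set ↔ ∀ i, 0 ≤ x i - Q.corner i ∧
      ⌊(x i - Q.corner i) / (Q.side / 2 ^ k)⌋₊ = m i := by
  have hℓ : 0 < Q.side / 2 ^ k := by have := Q.side_pos; positivity
  rw [mem_dmk_iff]
  exact forall_congr' fun i => interval_floor hℓ (m i)

theorem floor_scale {v ℓ : ℝ} (hℓ : 0 < ℓ) (d : ℕ) :
    ⌊v / (2 ^ d * ℓ)⌋₊ = ⌊v / ℓ⌋₊ / 2 ^ d := by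
  have h2 : v / (2 ^ d * ℓ) = (v / ℓ) / ((2 ^ d : ℕ) : ℝ) := by
    push_cast; rw [div_div]; ring_nf
  rw [h2, Nat.floor_div_natCast]

theorem dmk_set_subset {n} {Q : DyCube n} {k₁ k₂ : ℕ} {m₁ m₂ : Fin n → ℕ}
    (hk : k₁ ≤ k₂) {x : Fin n → ℝ} (h₁ : x ∈ (dmk Q k₁ m₁).set) (h₂ : x ∈ (dmk Q k₂ m₂).set) :
    (dmk Q k₂ m₂).set ⊆ (dmk Q k₁ m₁).set := by
  intro z hz
  rw [mem_dmk_iff_floor] at *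
  have hs := Q.side_pos
  have hℓ₂ : 0 < Q.side / 2 ^ k₂ := by positivity
  have key : Q.side / 2 ^ k₁ = 2 ^ (k₂ - k₁) * (Q.side / 2 ^ k₂) := by
    have h2 : (2:ℝ) ^ k₂ = 2 ^ (k₂ - k₁) * 2 ^ k₁ := by rw [← pow_add]; congr 1; omega
    rw [h2]
    field_simp
  intro i
  refine ⟨(hz i).1, ?_⟩
  rw [key, floor_scale hℓ₂, (hz i).2]
  rw [← (h₁ i).2, key, floor_scale hℓ₂, (h₂ i).2]

theorem dmk_eq_of_mem {n} {Q : DyCube n} {k : ℕ} {m₁ m₂ : Fin n → ℕ} {x : Fin n → ℝ}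
    (h₁ : x ∈ (dmk Q k m₁).set) (h₂ : x ∈ (dmk Q k m₂).set) : m₁ = m₂ := by
  rw [mem_dmk_iff_floor] at *
  exact funext fun i => ((h₁ i).2).symm.trans (h₂ i).2

theorem exists_dmk_mem {n} {Q : DyCube n} (k : ℕ) {x : Fin n → ℝ} (hx : x ∈ Q.set) :
    ∃ m : Fin n → ℕ, (∀ i, m i < 2 ^ k) ∧ x ∈ (dmk Q k m).set := by
  have hs := Q.side_pos
  have hℓ : 0 < Q.side / 2 ^ k := by positivity
  have hx' : ∀ i, Q.corner i ≤ x i ∧ x i < Q.corner i + Q.side := fun i => hx i (Set.mem_univ i)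
  refine ⟨fun i => ⌊(x i - Q.corner i) / (Q.side / 2 ^ k)⌋₊, fun i => ?_, ?_⟩
  · have h := hx' i
    have hlt : (x i - Q.corner i) / (Q.side / 2 ^ k) < ((2 ^ k : ℕ) : ℝ) := by
      rw [div_lt_iff₀ hℓ]
      push_cast
      have h2 : (2:ℝ) ^ k * (Q.side / 2 ^ k) = Q.side := by field_simp
      rw [h2]; linarith [h.2]
    exact Nat.floor_lt (div_nonneg (by linarith [h.1]) hℓ.le) |>.2 hlt
  · rw [mem_dmk_iff_floor]
    exact fun i => ⟨by linarith [(hx' i).1], rfl⟩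

theorem dmk_subset_self {n} {Q : DyCube n} {k : ℕ} {m : Fin n → ℕ} (hm : ∀ i, m i < 2 ^ k) :
    (dmk Q k m).set ⊆ Q.set := by
  intro z hz
  have h0 : z ∈ (dmk Q 0 fun _ => 0).set := by
    rw [mem_dmk_iff_floor] at *
    intro i
    refine ⟨(hz i).1, ?_⟩
    have := (hz i).2
    have hs := Q.side_pos
    have hℓ : 0 < Q.side / 2 ^ k := by positivity
    have key : Q.side / 2 ^ 0 = 2 ^ (k - 0) * (Q.side / 2 ^ k) := by
      simp only [pow_zero, Nat.sub_zero, div_one]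
      field_simp
    rw [key, floor_scale hℓ, this]
    simpa using Nat.div_eq_of_lt (hm i)
  rwa [dmk_self] at h0

theorem corner_mem_set {n} (Q : DyCube n) : Q.corner ∈ Q.set := by
  intro i _
  exact ⟨le_refl _, by linarith [Q.side_pos]⟩

theorem set_nonempty {n} (Q : DyCube n) : Q.set.Nonempty := ⟨Q.corner, corner_mem_set Q⟩

theorem measurableSet_set {n} (Q : DyCube n) : MeasurableSet Q.set :=
  MeasurableSet.univ_pi fun _ => measurableSet_Ico

theorem volume_set {n} (Q : DyCube n) :
    volume Q.set = ENNReal.ofReal (Q.side ^ n) := by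
  rw [DyCube.set, volume_pi_pi]
  simp only [Real.volume_Ico, add_sub_cancel_left]
  rw [Finset.prod_const, ← ENNReal.ofReal_pow Q.side_pos.le]
  simp

theorem volume_set_pos {n} (Q : DyCube n) : 0 < volume Q.set := by
  rw [volume_set]
  have := Q.side_pos
  exact ENNReal.ofReal_pos.2 (by positivity)

theorem volume_set_lt_top {n} (Q : DyCube n) : volume Q.set < ⊤ := by
  rw [volume_set]; exact ENNReal.ofReal_lt_top

end SparseAux
namespace SparseAux

theorem isDyadicSub_subset {n} {P Q : DyCube n} (h : P.IsDyadicSub Q) : P.set ⊆ Q.set := by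
  obtain ⟨k, m, hb, rfl⟩ := isDyadicSub_iff.1 h
  exact dmk_subset_self hb

theorem countable_dyadicSubs {n} (Q : DyCube n) :
    {P : DyCube n | P.IsDyadicSub Q}.Countable := by
  have : {P : DyCube n | P.IsDyadicSub Q} ⊆ Set.range (fun p : ℕ × (Fin n → ℕ) => dmk Q p.1 p.2) := by
    rintro P hP
    obtain ⟨k, m, _, rfl⟩ := isDyadicSub_iff.1 hP
    exact ⟨(k, m), rfl⟩
  exact (Set.countable_range _).mono this

theorem dmk_gen_eq {n} {Q : DyCube n} {k₁ k₂ : ℕ} {m₁ m₂ : Fin n → ℕ}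
    (h : dmk Q k₁ m₁ = dmk Q k₂ m₂) : k₁ = k₂ := by
  have hs : Q.side / 2 ^ k₁ = Q.side / 2 ^ k₂ := congrArg DyCube.side h
  have hsp := Q.side_pos
  rw [div_eq_div_iff (by positivity) (by positivity)] at hs
  have h2 : (2:ℝ) ^ k₁ = 2 ^ k₂ := by nlinarith
  exact Nat.pow_right_injective le_rfl (by exact_mod_cast h2)

/-- Parent cube. -/
theorem parent_spec {n} {Q : DyCube n} (k : ℕ) (m : Fin n → ℕ) (hm : ∀ i, m i < 2 ^ (k + 1)) :
    (∀ i, m i / 2 < 2 ^ k) ∧ (dmk Q (k + 1) m).set ⊆ (dmk Q k (fun i => m i / 2)).set ∧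
      (dmk Q k (fun i => m i / 2)).side = 2 * (dmk Q (k + 1) m).side := by
  have hs := Q.side_pos
  have hb : ∀ i, m i / 2 < 2 ^ k := fun i => by have := hm i; omega
  have hside : Q.side / 2 ^ k = 2 * (Q.side / 2 ^ (k + 1)) := by
    rw [pow_succ]; field_simp
  refine ⟨hb, ?_, hside⟩
  have hcor : (dmk Q (k + 1) m).corner ∈ (dmk Q k fun i => m i / 2).set := by
    rw [mem_dmk_iff]
    intro i
    simp only [dmk]
    have h1 : 2 * (m i / 2) ≤ m i := by omega
    have h2 : m i < 2 * (m i / 2) + 2 := by omega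
    have h1' : (2:ℝ) * ((m i / 2 : ℕ):ℝ) ≤ (m i : ℝ) := by exact_mod_cast h1
    have h2' : (m i : ℝ) < 2 * ((m i / 2 : ℕ):ℝ) + 2 := by exact_mod_cast h2
    have hℓ : 0 < Q.side / 2 ^ (k+1) := by positivity
    rw [hside]
    constructor <;> nlinarith
  exact dmk_set_subset (Nat.le_succ k) hcor (corner_mem_set _)

theorem nested_of_mem_mem {n} {Q : DyCube n} {k₁ k₂ : ℕ} {m₁ m₂ : Fin n → ℕ} {x : Fin n → ℝ}
    (hk : k₁ ≤ k₂) (h₁ : x ∈ (dmk Q k₁ m₁).set) (h₂ : x ∈ (dmk Q k₂ m₂).set) :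
    (dmk Q k₂ m₂).set ⊆ (dmk Q k₁ m₁).set := dmk_set_subset hk h₁ h₂

/-- Same-generation cubes containing a common point are equal. -/
theorem dmk_eq_of_mem' {n} {Q : DyCube n} {k : ℕ} {m₁ m₂ : Fin n → ℕ} {x : Fin n → ℝ}
    (h₁ : x ∈ (dmk Q k m₁).set) (h₂ : x ∈ (dmk Q k m₂).set) : dmk Q k m₁ = dmk Q k m₂ := by
  rw [dmk_eq_of_mem h₁ h₂]

/-- Points of a cube are within `side` of each other in every coordinate. -/
theorem abs_sub_lt_side {n} {P : DyCube n} {x z : Fin n → ℝ} (hx : x ∈ P.set) (hz : z ∈ P.set) 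
    (i : Fin n) : |x i - z i| < P.side := by
  have h1 := hx i (Set.mem_univ i)
  have h2 := hz i (Set.mem_univ i)
  rw [abs_lt]
  rcases h1 with ⟨a1, b1⟩; rcases h2 with ⟨a2, b2⟩
  constructor <;> nlinarith

/-- Small dyadic subcube around a point inside an open set. -/
theorem exists_small_dmk {n} {Q : DyCube n} {x : Fin n → ℝ} (hx : x ∈ Q.set)
    {O : Set (Fin n → ℝ)} (hO : IsOpen O) (hxO : x ∈ O) :
    ∃ k m, (∀ i, m i < 2 ^ k) ∧ x ∈ (dmk Q k m).set ∧ (dmk Q k m).set ⊆ O := by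
  obtain ⟨ε, hε, hball⟩ := Metric.isOpen_iff.1 hO x hxO
  have hs := Q.side_pos
  obtain ⟨k, hk⟩ := pow_unbounded_of_one_lt (Q.side / ε) (by norm_num : (1:ℝ) < 2)
  obtain ⟨m, hb, hmem⟩ := exists_dmk_mem (Q := Q) k hx
  refine ⟨k, m, hb, hmem, fun z hz => hball ?_⟩
  have hℓ : Q.side / 2 ^ k < ε := by
    rw [div_lt_iff₀ (by positivity)]
    rw [div_lt_iff₀ hε] at hk
    linarith [hk]
  have : dist z x < ε := by
    rcases Nat.eq_zero_or_pos n with h0 | _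
    · subst h0
      have : z = x := funext fun i => absurd i.2 (by omega)
      simp [this, hε]
    · rw [dist_pi_lt_iff hε]
      intro i
      rw [Real.dist_eq]
      have := abs_sub_lt_side hz hmem i
      have hside : (dmk Q k m).side = Q.side / 2 ^ k := rfl
      rw [hside] at this
      linarith
  exact this

end SparseAux
namespace SparseAux
open MeasureTheory

theorem measure_iUnion_le_of_monotone {α} [MeasurableSpace α] (μ : Measure α)
    {s : ℕ → Set α} (hs : Monotone s) {t : ℝ≥0∞} (h : ∀ k, μ (s k) ≤ t) :
    μ (⋃ k, s k) ≤ t :=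
  le_of_tendsto (tendsto_measure_iUnion_atTop hs) (Filter.Eventually.of_forall h)

/-- Key property of the rearrangement: the function exceeds its rearrangement value
on a set of measure at most `t`. -/
theorem rearrE_spec {α} [MeasurableSpace α] (μ : Measure α) (h : α → ℝ≥0∞) (t : ℝ≥0∞) :
    μ {x | rearrE μ h t < h x} ≤ t := by
  set S := {a : ℝ≥0∞ | μ {x | a < h x} ≤ t} with hS
  have hre : rearrE μ h t = sInf S := rfl
  rw [hre]
  rcases eq_or_ne (sInf S) ⊤ with htop | hne
  · rw [htop]
    have he : {x | (⊤:ℝ≥0∞) < h x} = ∅ := by ext x; simp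
    rw [he]; simp
  · have hak : ∀ k : ℕ, ∃ a ∈ S, a < sInf S + (↑(k+1))⁻¹ := by
      intro k
      rw [← sInf_lt_iff]
      exact ENNReal.lt_add_right hne (by simp)
    choose a haS halt using hak
    set b : ℕ → ℝ≥0∞ := fun k => (Finset.range (k+1)).inf' ⟨0, by simp⟩ a with hb
    have hbS : ∀ k, b k ∈ S := by
      intro k
      obtain ⟨i, _, hi⟩ := Finset.exists_mem_eq_inf' (⟨0, by simp⟩ : (Finset.range (k+1)).Nonempty) a
      show (Finset.range (k+1)).inf' ⟨0, by simp⟩ a ∈ S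
      rw [hi]; exact haS i
    have hbanti : Antitone b := by
      intro k₁ k₂ hk
      exact Finset.inf'_mono a (Finset.range_subset_range.2 (by omega)) _
    have hsub : {x | sInf S < h x} ⊆ ⋃ k, {x | b k < h x} := by
      intro x hx
      simp only [Set.mem_setOf_eq] at hx
      simp only [Set.mem_iUnion, Set.mem_setOf_eq]
      rcases eq_or_ne (h x) ⊤ with htx | htx
      · refine ⟨0, lt_of_le_of_lt (Finset.inf'_le a (by simp : (0:ℕ) ∈ Finset.range (0+1))) ?_⟩
        rw [htx]
        have hfin : sInf S + (((0+1 : ℕ)) : ℝ≥0∞)⁻¹ < ⊤ :=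
          lt_top_iff_ne_top.2 (ENNReal.add_ne_top.2 ⟨hne, by simp⟩)
        exact lt_of_lt_of_le (halt 0) hfin.le
      · obtain ⟨k, hk⟩ := ENNReal.exists_inv_nat_lt (a := h x - sInf S) (by
          simp only [ne_eq, tsub_eq_zero_iff_le, not_le]; exact hx)
        refine ⟨k, lt_of_le_of_lt (Finset.inf'_le a (by simp : k ∈ Finset.range (k+1))) ?_⟩
        have h1 : (↑(k+1) : ℝ≥0∞)⁻¹ ≤ (↑k)⁻¹ := by
          apply ENNReal.inv_le_inv.2; exact_mod_cast Nat.le_succ k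
        calc a k < sInf S + (↑(k+1))⁻¹ := halt k
        _ < sInf S + (h x - sInf S) := ENNReal.add_lt_add_left hne (lt_of_le_of_lt h1 hk)
        _ = h x := add_tsub_cancel_of_le hx.le
    have humono : Monotone (fun k => {x | b k < h x}) := by
      intro k₁ k₂ hk x hx
      exact lt_of_le_of_lt (hbanti hk) hx
    calc μ {x | sInf S < h x} ≤ μ (⋃ k, {x | b k < h x}) := measure_mono hsub
    _ ≤ t := measure_iUnion_le_of_monotone μ humono (fun k => hbS k)

theorem ennreal_add_rpow_le {a b : ℝ≥0∞} {r : ℝ} (hr : 0 ≤ r) :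
    (a + b) ^ r ≤ 2 ^ r * (a ^ r + b ^ r) := by
  have h1 : a + b ≤ 2 * (a ⊔ b) := by
    rw [two_mul]
    exact add_le_add le_sup_left le_sup_right
  calc (a + b) ^ r ≤ (2 * (a ⊔ b)) ^ r := ENNReal.rpow_le_rpow h1 hr
  _ = 2 ^ r * (a ⊔ b) ^ r := ENNReal.mul_rpow_of_nonneg _ _ hr
  _ ≤ 2 ^ r * (a ^ r + b ^ r) := by
      gcongr
      rcases le_total a b with hab | hab
      · rw [sup_eq_right.2 hab]; exact le_add_self
      · rw [sup_eq_left.2 hab]; exact self_le_add_right _ _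

end SparseAux
namespace SparseAux
open MeasureTheory

variable {n : ℕ}

/-- The selection density constant `3/2^(n+2)`. -/
noncomputable def lam (n : ℕ) : ℝ≥0∞ := ENNReal.ofReal (3 / 2 ^ (n + 2))

theorem lam_pos : 0 < lam n := ENNReal.ofReal_pos.2 (by positivity)
theorem lam_ne_top : lam n ≠ ⊤ := ENNReal.ofReal_ne_top
theorem lam_lt_one : lam n < 1 := by
  rw [lam, ← ENNReal.ofReal_one]
  apply (ENNReal.ofReal_lt_ofReal_iff (by norm_num)).2
  rw [div_lt_one (by positivity)]
  calc (3:ℝ) < 2 ^ 2 := by norm_num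
  _ ≤ 2 ^ (n + 2) := by
      apply pow_le_pow_right₀ (by norm_num)
      omega

/-- Density condition for selection. -/
def phi (O : Set (Fin n → ℝ)) (R : DyCube n) : Prop :=
  lam n * volume R.set < volume (R.set ∩ O)

/-- The selected (maximal) cubes in `P` relative to the open set `O`. -/
def Ch (O : Set (Fin n → ℝ)) (P : DyCube n) : Set (DyCube n) :=
  {R | ∃ k m, (∀ i, m i < 2 ^ k) ∧ R = dmk P k m ∧ phi O R ∧
    ∀ k' m', k' < k → (∀ i, m' i < 2 ^ k') → R.set ⊆ (dmk P k' m').set →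
      ¬ phi O (dmk P k' m')}

theorem Ch_isDyadicSub {O} {P R : DyCube n} (h : R ∈ Ch O P) : R.IsDyadicSub P := by
  obtain ⟨k, m, hb, rfl, _⟩ := h
  exact isDyadicSub_iff.2 ⟨k, m, hb, rfl⟩

theorem Ch_phi {O} {P R : DyCube n} (h : R ∈ Ch O P) : phi O R := by
  obtain ⟨k, m, hb, rfl, hphi, _⟩ := h
  exact hphi

theorem Ch_countable (O) (P : DyCube n) : (Ch O P).Countable :=
  (countable_dyadicSubs P).mono fun R hR => Ch_isDyadicSub hR

theorem Ch_pairwiseDisjoint (O) (P : DyCube n) :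
    (Ch O P).PairwiseDisjoint DyCube.set := by
  intro R₁ h₁ R₂ h₂ hne
  obtain ⟨k₁, m₁, hb₁, rfl, hphi₁, hmax₁⟩ := h₁
  obtain ⟨k₂, m₂, hb₂, rfl, hphi₂, hmax₂⟩ := h₂
  rw [Function.onFun, Set.disjoint_left]
  intro x hx₁ hx₂
  rcases Nat.lt_trichotomy k₁ k₂ with hk | hk | hk
  · exact hmax₂ k₁ m₁ hk hb₁ (dmk_set_subset hk.le hx₁ hx₂) hphi₁
  · subst hk
    exact hne (congrArg (dmk P k₁) (dmk_eq_of_mem hx₁ hx₂))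
  · exact hmax₁ k₂ m₂ hk hb₂ (dmk_set_subset hk.le hx₂ hx₁) hphi₂

/-- Every cube satisfying `phi` is contained in a maximal one. -/
theorem exists_maximal {O} {P : DyCube n} :
    ∀ k m, (∀ i, m i < 2 ^ k) → phi O (dmk P k m) →
      ∃ R ∈ Ch O P, (dmk P k m).set ⊆ R.set := by
  intro k
  induction k using Nat.strong_induction_on with
  | _ k ih =>
    intro m hb hphi
    by_cases hmax : ∀ k' m', k' < k → (∀ i, m' i < 2 ^ k') →
        (dmk P k m).set ⊆ (dmk P k' m').set → ¬ phi O (dmk P k' m')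
    · exact ⟨dmk P k m, ⟨k, m, hb, rfl, hphi, hmax⟩, subset_rfl⟩
    · push_neg at hmax
      obtain ⟨k', m', hk', hb', hsub, hphi'⟩ := hmax
      obtain ⟨R, hR, hsub'⟩ := ih k' hk' m' hb' hphi'
      exact ⟨R, hR, hsub.trans hsub'⟩

/-- Coverage: `O ∩ P` is covered by the selected cubes. -/
theorem Ch_cover {O : Set (Fin n → ℝ)} (hO : IsOpen O) {P : DyCube n} {x : Fin n → ℝ}
    (hx : x ∈ P.set) (hxO : x ∈ O) : ∃ R ∈ Ch O P, x ∈ R.set := by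
  obtain ⟨k, m, hb, hmem, hsub⟩ := exists_small_dmk hx hO hxO
  have hphi : phi O (dmk P k m) := by
    rw [phi]
    have : (dmk P k m).set ∩ O = (dmk P k m).set := Set.inter_eq_left.2 hsub
    rw [this]
    calc lam n * volume (dmk P k m).set < 1 * volume (dmk P k m).set := by
          rw [ENNReal.mul_lt_mul_iff_left (volume_set_pos _).ne' (volume_set_lt_top _).ne]
          exact lam_lt_one
    _ = volume (dmk P k m).set := one_mul _
  obtain ⟨R, hR, hsub'⟩ := exists_maximal k m hb hphi
  exact ⟨R, hR, hsub' hmem⟩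

end SparseAux
namespace SparseAux
open MeasureTheory

variable {n : ℕ}

theorem not_phi_self {O : Set (Fin n → ℝ)} {P : DyCube n} {η : ℝ} (hη0 : 0 ≤ η)
    (hvol : volume O < lam n * (ENNReal.ofReal (1 - η) * volume P.set)) : ¬ phi O P := by
  rw [phi, not_lt]
  calc volume (P.set ∩ O) ≤ volume O := measure_mono Set.inter_subset_right
  _ ≤ lam n * (ENNReal.ofReal (1 - η) * volume P.set) := hvol.le
  _ ≤ lam n * (1 * volume P.set) := by
      gcongr
      exact ENNReal.ofReal_le_one.2 (by linarith)
  _ = lam n * volume P.set := by rw [one_mul]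

/-- Parent density bound for selected cubes: `|R ∩ O| ≤ (3/4)|R|`. -/
theorem Ch_parent_bound {O : Set (Fin n → ℝ)} {P : DyCube n} {η : ℝ} (hη0 : 0 ≤ η)
    (hvol : volume O < lam n * (ENNReal.ofReal (1 - η) * volume P.set))
    {R : DyCube n} (hR : R ∈ Ch O P) :
    volume (R.set ∩ O) ≤ ENNReal.ofReal (3 / 4) * volume R.set := by
  obtain ⟨k, m, hb, rfl, hphi, hmax⟩ := hR
  rcases Nat.eq_zero_or_pos k with rfl | hk
  · exfalso
    have hm : m = fun _ => 0 := funext fun i => by have := hb i; omega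
    rw [hm, dmk_self] at hphi
    exact not_phi_self hη0 hvol hphi
  · obtain ⟨k', rfl⟩ : ∃ k', k = k' + 1 := ⟨k - 1, by omega⟩
    obtain ⟨hb', hsub, hside⟩ := parent_spec (Q := P) k' m hb
    have hnphi := hmax k' (fun i => m i / 2) (by omega) hb' hsub
    rw [phi, not_lt] at hnphi
    have hvolhat : volume (dmk P k' fun i => m i / 2).set =
        ENNReal.ofReal (2 ^ n) * volume (dmk P (k' + 1) m).set := by
      rw [volume_set, volume_set, hside, ← ENNReal.ofReal_mul (by positivity)]
      congr 1
      rw [mul_pow]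
    calc volume ((dmk P (k'+1) m).set ∩ O)
        ≤ volume ((dmk P k' fun i => m i / 2).set ∩ O) := by
          apply measure_mono; exact Set.inter_subset_inter_left O hsub
    _ ≤ lam n * volume (dmk P k' fun i => m i / 2).set := hnphi
    _ = lam n * ENNReal.ofReal (2 ^ n) * volume (dmk P (k'+1) m).set := by
          rw [hvolhat, mul_assoc]
    _ = ENNReal.ofReal (3 / 4) * volume (dmk P (k'+1) m).set := by
          congr 1
          rw [lam, ← ENNReal.ofReal_mul (by positivity)]
          congr 1
          rw [div_mul_eq_mul_div, pow_add]
          field_simp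
          ring
  
/-- Total measure of the selected cubes. -/
theorem Ch_sum_bound {O : Set (Fin n → ℝ)} {P : DyCube n} {η : ℝ} (hOm : MeasurableSet O)
    (hvol : volume O < lam n * (ENNReal.ofReal (1 - η) * volume P.set)) :
    ∑' R : Ch O P, volume (R : DyCube n).set ≤ ENNReal.ofReal (1 - η) * volume P.set := by
  have key : ∀ R : Ch O P, volume (R : DyCube n).set ≤
      (lam n)⁻¹ * volume ((R : DyCube n).set ∩ O) := by
    rintro ⟨R, hR⟩
    have := Ch_phi hR
    rw [phi] at this
    rw [← one_mul (volume R.set), ← ENNReal.inv_mul_cancel lam_pos.ne' lam_ne_top, mul_assoc]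
    exact mul_le_mul_right this.le _
  calc ∑' R : Ch O P, volume (R : DyCube n).set
      ≤ ∑' R : Ch O P, (lam n)⁻¹ * volume ((R : DyCube n).set ∩ O) := ENNReal.tsum_le_tsum key
  _ = (lam n)⁻¹ * ∑' R : Ch O P, volume ((R : DyCube n).set ∩ O) := ENNReal.tsum_mul_left
  _ ≤ (lam n)⁻¹ * volume O := by
      gcongr
      have hpd : (Ch O P).PairwiseDisjoint (fun R : DyCube n => R.set ∩ O) := by
        intro a ha b hb hab
        exact ((Ch_pairwiseDisjoint O P) ha hb hab).mono
          Set.inter_subset_left Set.inter_subset_left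
      have hme : ∀ R ∈ Ch O P, MeasurableSet (R.set ∩ O) := fun R _ =>
        (measurableSet_set R).inter hOm
      rw [← measure_biUnion (Ch_countable O P) hpd hme]
      exact measure_mono (Set.iUnion₂_subset fun R hR => Set.inter_subset_right)
  _ ≤ (lam n)⁻¹ * (lam n * (ENNReal.ofReal (1 - η) * volume P.set)) := by
      gcongr
  _ = ENNReal.ofReal (1 - η) * volume P.set := by
      rw [← mul_assoc, ENNReal.inv_mul_cancel lam_pos.ne' lam_ne_top, one_mul]

end SparseAux
namespace SparseAux
open MeasureTheory

variable {n : ℕ}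

/-- The generations of the sparse family determined by the choice `O` of open sets. -/
def Fam (O : DyCube n → Set (Fin n → ℝ)) (Q : DyCube n) : ℕ → Set (DyCube n)
  | 0 => {Q}
  | (k+1) => {R | ∃ P ∈ Fam O Q k, R ∈ Ch (O P) P}

variable {O : DyCube n → Set (Fin n → ℝ)} {Q : DyCube n} {η : ℝ}

theorem Fam_dyadic (k : ℕ) : ∀ P ∈ Fam O Q k, P.IsDyadicSub Q := by
  induction k with
  | zero => rintro P rfl; exact isDyadicSub_refl _
  | succ k ih =>
    rintro R ⟨P, hP, hR⟩
    exact isDyadicSub_trans (Ch_isDyadicSub hR) (ih P hP)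

theorem Fam_countable (k : ℕ) : (Fam O Q k).Countable :=
  (countable_dyadicSubs Q).mono (Fam_dyadic k)

theorem Fam_disj (k : ℕ) : (Fam O Q k).PairwiseDisjoint DyCube.set := by
  induction k with
  | zero => rintro P rfl P' rfl hne; exact absurd rfl hne
  | succ k ih =>
    rintro R₁ ⟨P₁, hP₁, hR₁⟩ R₂ ⟨P₂, hP₂, hR₂⟩ hne
    by_cases hPP : P₁ = P₂
    · subst hPP
      exact Ch_pairwiseDisjoint (O P₁) P₁ hR₁ hR₂ hne
    · exact Set.disjoint_of_subset (isDyadicSub_subset (Ch_isDyadicSub hR₁))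
        (isDyadicSub_subset (Ch_isDyadicSub hR₂)) (ih hP₁ hP₂ hPP)

theorem Fam_nested (k : ℕ) : genUnion (Fam O Q) (k + 1) ⊆ genUnion (Fam O Q) k := by
  rintro x hx
  simp only [genUnion, Set.mem_iUnion] at *
  obtain ⟨R, ⟨P, hP, hR⟩, hx⟩ := hx
  exact ⟨P, hP, isDyadicSub_subset (Ch_isDyadicSub hR) hx⟩

theorem volume_genUnion_eq (k : ℕ) :
    volume (genUnion (Fam O Q) k) = ∑' P : Fam O Q k, volume (P : DyCube n).set :=
  measure_biUnion (Fam_countable k) (Fam_disj k) (fun P _ => measurableSet_set P)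

theorem volume_genUnion_le
    (hOm : ∀ P : DyCube n, MeasurableSet (O P))
    (hOvol : ∀ P : DyCube n, volume (O P) < lam n * (ENNReal.ofReal (1 - η) * volume P.set))
    (k : ℕ) :
    volume (genUnion (Fam O Q) k) ≤ ENNReal.ofReal (1 - η) ^ k * volume Q.set := by
  induction k with
  | zero =>
    simp only [genUnion, Fam, pow_zero, one_mul]
    simp
  | succ k ih =>
    have step1 : genUnion (Fam O Q) (k+1) ⊆ ⋃ P ∈ Fam O Q k, ⋃ R ∈ Ch (O P) P, R.set := by
      rintro x hx
      simp only [genUnion, Set.mem_iUnion] at *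
      obtain ⟨R, ⟨P, hP, hR⟩, hx⟩ := hx
      exact ⟨P, hP, R, hR, hx⟩
    calc volume (genUnion (Fam O Q) (k+1))
        ≤ volume (⋃ P ∈ Fam O Q k, ⋃ R ∈ Ch (O P) P, R.set) := measure_mono step1
    _ ≤ ∑' P : Fam O Q k, volume (⋃ R ∈ Ch (O (P : DyCube n)) (P : DyCube n), R.set) :=
        measure_biUnion_le volume (Fam_countable k) _
    _ ≤ ∑' P : Fam O Q k, ENNReal.ofReal (1 - η) * volume (P : DyCube n).set := by
        apply ENNReal.tsum_le_tsum
        intro P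
        calc volume (⋃ R ∈ Ch (O (P : DyCube n)) (P : DyCube n), R.set)
            ≤ ∑' R : Ch (O (P : DyCube n)) (P : DyCube n), volume (R : DyCube n).set :=
            measure_biUnion_le volume (Ch_countable _ _) _
        _ ≤ ENNReal.ofReal (1 - η) * volume (P : DyCube n).set :=
            Ch_sum_bound (hOm _) (hOvol _)
    _ = ENNReal.ofReal (1 - η) * volume (genUnion (Fam O Q) k) := by
        rw [volume_genUnion_eq, ENNReal.tsum_mul_left]
    _ ≤ ENNReal.ofReal (1 - η) * (ENNReal.ofReal (1 - η) ^ k * volume Q.set) := by gcongr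
    _ = ENNReal.ofReal (1 - η) ^ (k+1) * volume Q.set := by ring

theorem Fam_contracting (hη : η ∈ Set.Ioo (0:ℝ) 1)
    (hOm : ∀ P : DyCube n, MeasurableSet (O P))
    (hOvol : ∀ P : DyCube n, volume (O P) < lam n * (ENNReal.ofReal (1 - η) * volume P.set)) :
    ContractingFamily Q (Fam O Q) := by
  refine ⟨rfl, Fam_dyadic, Fam_disj, Fam_nested, ?_⟩
  have hlt : ENNReal.ofReal (1 - η) < 1 := by
    rw [← ENNReal.ofReal_one]
    exact (ENNReal.ofReal_lt_ofReal_iff (by norm_num)).2 (by linarith [hη.1])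
  have h0 : Filter.Tendsto (fun k => ENNReal.ofReal (1 - η) ^ k * volume Q.set)
      Filter.atTop (nhds 0) := by
    rw [show (0:ℝ≥0∞) = 0 * volume Q.set by simp]
    exact ENNReal.Tendsto.mul_const (ENNReal.tendsto_pow_atTop_nhds_zero_of_lt_one hlt)
      (Or.inr (volume_set_lt_top Q).ne)
  exact tendsto_of_tendsto_of_tendsto_of_le_of_le tendsto_const_nhds h0
    (fun k => zero_le) (volume_genUnion_le hOm hOvol)

theorem Fam_sparse (hη : η ∈ Set.Ioo (0:ℝ) 1)
    (hOm : ∀ P : DyCube n, MeasurableSet (O P))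
    (hOvol : ∀ P : DyCube n, volume (O P) < lam n * (ENNReal.ofReal (1 - η) * volume P.set)) :
    ∀ k, ∀ P ∈ Fam O Q k,
      ENNReal.ofReal η * volume P.set ≤ volume (P.set \ genUnion (Fam O Q) (k+1)) := by
  intro k P hP
  have hsub : P.set \ (⋃ R ∈ Ch (O P) P, R.set) ⊆ P.set \ genUnion (Fam O Q) (k+1) := by
    intro x ⟨hx1, hx2⟩
    refine ⟨hx1, fun hmem => hx2 ?_⟩
    simp only [genUnion, Set.mem_iUnion] at hmem
    obtain ⟨R, ⟨P', hP', hR⟩, hxR⟩ := hmem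
    by_cases hPP : P' = P
    · subst hPP
      exact Set.mem_biUnion hR hxR
    · exact absurd hx1 (Set.disjoint_left.1 (Set.disjoint_of_subset
        (isDyadicSub_subset (Ch_isDyadicSub hR)) subset_rfl
        (Fam_disj k hP' hP hPP))  hxR).elim
  have hΩ : volume (⋃ R ∈ Ch (O P) P, R.set) ≤ ENNReal.ofReal (1 - η) * volume P.set :=
    le_trans (measure_biUnion_le volume (Ch_countable _ _) _) (Ch_sum_bound (hOm P) (hOvol P))
  have hsplit : volume P.set ≤
      volume (P.set \ ⋃ R ∈ Ch (O P) P, R.set) + ENNReal.ofReal (1 - η) * volume P.set := by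
    calc volume P.set
        ≤ volume ((P.set \ ⋃ R ∈ Ch (O P) P, R.set) ∪ ⋃ R ∈ Ch (O P) P, R.set) :=
          measure_mono (fun x hx => by
            by_cases h : x ∈ ⋃ R ∈ Ch (O P) P, R.set
            exacts [Or.inr h, Or.inl ⟨hx, h⟩])
    _ ≤ volume (P.set \ ⋃ R ∈ Ch (O P) P, R.set) + volume (⋃ R ∈ Ch (O P) P, R.set) :=
          measure_union_le _ _
    _ ≤ _ := by gcongr
  have hsum : ENNReal.ofReal η * volume P.set + ENNReal.ofReal (1 - η) * volume P.set
      = volume P.set := by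
    rw [← add_mul, ← ENNReal.ofReal_add (le_of_lt hη.1) (by linarith [hη.2])]
    norm_num
  have hfin : ENNReal.ofReal (1 - η) * volume P.set ≠ ⊤ :=
    ENNReal.mul_ne_top ENNReal.ofReal_ne_top (volume_set_lt_top P).ne
  have hsplit' : ENNReal.ofReal η * volume P.set + ENNReal.ofReal (1 - η) * volume P.set ≤
      volume (P.set \ ⋃ R ∈ Ch (O P) P, R.set) + ENNReal.ofReal (1 - η) * volume P.set := by
    rw [hsum]; exact hsplit
  have hstep := (ENNReal.add_le_add_iff_right hfin).1 hsplit'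
  exact hstep.trans (measure_mono hsub)

end SparseAux
namespace SparseAux
open MeasureTheory

variable {n : ℕ} (f : DyCube n → (Fin n → ℝ) → ℝ)
  (g : DyCube n → DyCube n → (Fin n → ℝ) → ℝ) (η : ℝ)

/-- The measure threshold `t_P`. -/
noncomputable def tP (η : ℝ) (P : DyCube n) : ℝ≥0∞ :=
  volume P.set * ENNReal.ofReal ((1 - η) / 2 ^ (n + 2))

noncomputable def AP (P : DyCube n) : ℝ≥0∞ :=
  rearrE volume (fun y => P.set.indicator (fun z => ENNReal.ofReal |f P z|) y) (tP η P)

noncomputable def BP (P : DyCube n) : ℝ≥0∞ :=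
  rearrE volume (sharpM g P) (tP η P)

theorem gammaP_eq (P : DyCube n) : gammaP f g η P = AP f η P + BP g η P := rfl

/-- The exceptional set `E_P`. -/
def EP (P : DyCube n) : Set (Fin n → ℝ) :=
  {x | AP f η P < P.set.indicator (fun z => ENNReal.ofReal |f P z|) x} ∪
    {x | BP g η P < sharpM g P x}

theorem volume_EP_le (P : DyCube n) : volume (EP f g η P) ≤ 2 * tP η P := by
  refine (measure_union_le _ _).trans ?_
  rw [two_mul]
  exact add_le_add (rearrE_spec _ _ _) (rearrE_spec _ _ _)

theorem tP_pos (hη : η < 1) (P : DyCube n) : 0 < tP η P := by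
  apply ENNReal.mul_pos (volume_set_pos P).ne'
  exact (ENNReal.ofReal_pos.2 (div_pos (by linarith) (by positivity))).ne'

theorem tP_ne_top (P : DyCube n) : tP η P ≠ ⊤ :=
  ENNReal.mul_ne_top (volume_set_lt_top P).ne ENNReal.ofReal_ne_top

theorem lam_mul_eq (hη1 : η < 1) (P : DyCube n) :
    lam n * (ENNReal.ofReal (1 - η) * volume P.set) = 3 * tP η P := by
  have h1 : lam n * ENNReal.ofReal (1 - η)
      = ENNReal.ofReal (3 * ((1 - η) / 2 ^ (n+2))) := by
    rw [lam, ← ENNReal.ofReal_mul (by positivity)]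
    congr 1
    ring
  have h2 : (3:ℝ≥0∞) * ENNReal.ofReal ((1 - η) / 2 ^ (n+2))
      = ENNReal.ofReal (3 * ((1 - η) / 2 ^ (n+2))) := by
    rw [ENNReal.ofReal_mul (by norm_num : (0:ℝ) ≤ 3)]
    norm_num
  rw [tP, ← mul_assoc, h1, mul_comm (volume P.set) _, ← mul_assoc, h2]

/-- Existence of a small open superset of `E_P`. -/
theorem exists_O (hη1 : η < 1) (P : DyCube n) :
    ∃ Ot : Set (Fin n → ℝ), IsOpen Ot ∧ EP f g η P ⊆ Ot ∧
      volume Ot < lam n * (ENNReal.ofReal (1 - η) * volume P.set) := by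
  rw [lam_mul_eq η hη1]
  have h23 : (2:ℝ≥0∞) * tP η P < 3 * tP η P := by
    rw [ENNReal.mul_lt_mul_iff_left (tP_pos η hη1 P).ne' (tP_ne_top η P)]
    norm_num
  obtain ⟨U, hU1, hU2, hU3⟩ :=
    Set.exists_isOpen_lt_of_lt (EP f g η P) _ (lt_of_le_of_lt (volume_EP_le f g η P) h23)
  exact ⟨U, hU2, hU1, hU3⟩

theorem not_mem_EP {P : DyCube n} {x : Fin n → ℝ} (hx : x ∈ P.set)
    (hxE : x ∉ EP f g η P) :
    ENNReal.ofReal |f P x| ≤ AP f η P ∧ sharpM g P x ≤ BP g η P := by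
  rw [EP, Set.mem_union, not_or] at hxE
  obtain ⟨h1, h2⟩ := hxE
  simp only [Set.mem_setOf_eq, not_lt] at h1 h2
  rw [Set.indicator_of_mem hx] at h1
  exact ⟨h1, h2⟩

theorem osc_le_sharpM {P R : DyCube n} (hRP : R.IsDyadicSub P) {y : Fin n → ℝ}
    (hy : y ∈ R.set) : oscE (g R P) R.set ≤ sharpM g P y :=
  le_iSup (fun P' : {P' : DyCube n // P'.IsDyadicSub P ∧ y ∈ P'.set} =>
    oscE (g (P' : DyCube n) P) (P' : DyCube n).set) ⟨R, hRP, hy⟩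

/-- Key oscillation estimate on a selected cube. -/
theorem K2 {P R : DyCube n}
    (hcompat : ∀ x, |g R P x| ≤ |f R x| + |f P x|)
    (hRP : R.IsDyadicSub P) {Ot : Set (Fin n → ℝ)}
    (hOt : EP f g η P ⊆ Ot) (hη0 : 0 < η) (hη1 : η < 1)
    (hOvol : volume (R.set ∩ Ot) ≤ ENNReal.ofReal (3/4) * volume R.set) :
    ∀ᵐ x ∂volume, x ∈ R.set →
      ENNReal.ofReal |g R P x| ≤ gammaP f g η P + gammaP f g η R := by
  set μR := volume.restrict R.set with hμR
  set o := oscE (g R P) R.set with ho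
  have hosc : ∀ᵐ p ∂(μR.prod μR),
      ENNReal.ofReal |g R P p.1 - g R P p.2| ≤ o := ENNReal.ae_le_essSup _
  have hae := Measure.ae_ae_of_ae_prod hosc
  apply ae_imp_of_ae_restrict (s := R.set)
  rw [← hμR]
  filter_upwards [hae, ae_restrict_mem (measurableSet_set R)] with x hyx hxR
  -- find a good point y
  set B1 := Ot with hB1
  set B2 := {y | AP f η R < ENNReal.ofReal |f R y|} with hB2
  set B3 := {y | ¬ ENNReal.ofReal |g R P x - g R P y| ≤ o} with hB3
  have hB3null : μR B3 = 0 := by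
    rw [MeasureTheory.ae_iff] at hyx
    exact hyx
  have hB2vol : volume (B2 ∩ R.set) ≤ tP η R := by
    have hsub : B2 ∩ R.set ⊆
        {y | AP f η R < R.set.indicator (fun z => ENNReal.ofReal |f R z|) y} := by
      rintro y ⟨hy2, hyR⟩
      rw [Set.mem_setOf_eq, Set.indicator_of_mem hyR]
      exact hy2
    exact (measure_mono hsub).trans (rearrE_spec _ _ _)
  have hgood : ∃ y, y ∈ R.set ∧ y ∉ B1 ∧ y ∉ B2 ∧ y ∉ B3 := by
    by_contra hcon
    push_neg at hcon
    have hsub : R.set ⊆ (B1 ∩ R.set) ∪ (B2 ∩ R.set) ∪ (B3 ∩ R.set) := by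
      intro y hy
      rcases Classical.em (y ∈ B1) with h | h
      · exact Or.inl (Or.inl ⟨h, hy⟩)
      rcases Classical.em (y ∈ B2) with h' | h'
      · exact Or.inl (Or.inr ⟨h', hy⟩)
      · exact Or.inr ⟨hcon y hy h h', hy⟩
    have hb3 : volume (B3 ∩ R.set) = 0 := by
      have h := hB3null
      rwa [hμR, Measure.restrict_apply' (measurableSet_set R)] at h
    have htot : volume R.set ≤ ENNReal.ofReal (3/4) * volume R.set + tP η R := by
      calc volume R.set ≤ volume ((B1 ∩ R.set) ∪ (B2 ∩ R.set) ∪ (B3 ∩ R.set)) :=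
            measure_mono hsub
      _ ≤ volume ((B1 ∩ R.set) ∪ (B2 ∩ R.set)) + volume (B3 ∩ R.set) := measure_union_le _ _
      _ = volume ((B1 ∩ R.set) ∪ (B2 ∩ R.set)) := by rw [hb3, add_zero]
      _ ≤ volume (B1 ∩ R.set) + volume (B2 ∩ R.set) := measure_union_le _ _
      _ ≤ ENNReal.ofReal (3/4) * volume R.set + tP η R := by
          apply add_le_add ?_ hB2vol
          exact (measure_mono (by rw [Set.inter_comm] : B1 ∩ R.set ⊆ R.set ∩ B1)).trans hOvol
    have hlt : ENNReal.ofReal (3/4) * volume R.set + tP η R < volume R.set := by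
      rw [tP, mul_comm (volume R.set) _, ← add_mul]
      rw [← ENNReal.ofReal_add (by norm_num) (div_nonneg (by linarith) (by positivity))]
      calc ENNReal.ofReal (3/4 + (1 - η) / 2 ^ (n + 2)) * volume R.set
          < 1 * volume R.set := by
            rw [ENNReal.mul_lt_mul_iff_left (volume_set_pos R).ne' (volume_set_lt_top R).ne]
            rw [← ENNReal.ofReal_one]
            apply (ENNReal.ofReal_lt_ofReal_iff (by norm_num)).2
            have h4 : (4:ℝ) ≤ 2 ^ (n + 2) := by
              calc (4:ℝ) = 2 ^ 2 := by norm_num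
              _ ≤ 2 ^ (n + 2) := by
                  apply pow_le_pow_right₀ (by norm_num); omega
            have : (1 - η) / 2 ^ (n + 2) ≤ (1 - η) / 4 := by
              apply div_le_div_of_nonneg_left (by linarith) (by norm_num) h4
            linarith
      _ = volume R.set := one_mul _
    exact absurd htot (not_le.2 hlt)
  obtain ⟨y, hyR, hy1, hy2, hy3⟩ := hgood
  have hyE : y ∉ EP f g η P := fun hmem => hy1 (hOt hmem)
  have hyP : y ∈ P.set := isDyadicSub_subset hRP hyR
  obtain ⟨hfP, hsharp⟩ := not_mem_EP f g η hyP hyE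
  have hfR : ENNReal.ofReal |f R y| ≤ AP f η R := not_lt.1 hy2
  have hoscxy : ENNReal.ofReal |g R P x - g R P y| ≤ o := not_not.1 hy3
  have hosc_le : o ≤ BP g η P := le_trans (osc_le_sharpM g hRP hyR) hsharp
  calc ENNReal.ofReal |g R P x|
      ≤ ENNReal.ofReal (|g R P x - g R P y| + |g R P y|) := by
        apply ENNReal.ofReal_le_ofReal
        calc |g R P x| = |(g R P x - g R P y) + g R P y| := by ring_nf
        _ ≤ |g R P x - g R P y| + |g R P y| := abs_add_le _ _
  _ = ENNReal.ofReal |g R P x - g R P y| + ENNReal.ofReal |g R P y| :=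
        ENNReal.ofReal_add (abs_nonneg _) (abs_nonneg _)
  _ ≤ BP g η P + ENNReal.ofReal (|f R y| + |f P y|) := by
        apply add_le_add (hoscxy.trans hosc_le)
        exact ENNReal.ofReal_le_ofReal (hcompat y)
  _ = BP g η P + (ENNReal.ofReal |f R y| + ENNReal.ofReal |f P y|) := by
        rw [ENNReal.ofReal_add (abs_nonneg _) (abs_nonneg _)]
  _ ≤ BP g η P + (AP f η R + AP f η P) := by
        exact add_le_add le_rfl (add_le_add hfR hfP)
  _ ≤ gammaP f g η P + gammaP f g η R := by
        rw [gammaP_eq, gammaP_eq]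
        have he : BP g η P + (AP f η R + AP f η P) = (AP f η P + BP g η P) + AP f η R := by
          ring
        rw [he]
        exact add_le_add le_rfl le_self_add

end SparseAux
namespace SparseAux
open MeasureTheory

theorem genUnion_zero {n : ℕ} {O : DyCube n → Set (Fin n → ℝ)} {Q : DyCube n} :
    genUnion (Fam O Q) 0 = Q.set := by
  simp [genUnion, Fam]

end SparseAux


open SparseAux in
/-- Pointwise operator-free sparse domination principle: if `{f_Q, f_{P,Q}}` satisfies the
`ℓ^r`-condition with constant `C` and `|f_{P,Q}| ≤ |f_P| + |f_Q|`, then for any cube `Q` and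
`η ∈ (0,1)` there is an `η`-sparse family `F ⊆ D(Q)` such that a.e. on `Q`,
`|f_Q| ≲ C (∑_{P ∈ F} γ_P^r χ_P)^{1/r}`. -/
theorem stmt11 {n : ℕ} (r C : ℝ) (hr : 0 < r) (hC : 0 < C)
    (f : DyCube n → (Fin n → ℝ) → ℝ) (g : DyCube n → DyCube n → (Fin n → ℝ) → ℝ)
    (hmf : ∀ Q, Measurable (f Q)) (hmg : ∀ P Q, Measurable (g P Q))
    (hLr : LrCondition r C f g)
    (hcompat : ∀ Q P : DyCube n, P.IsDyadicSub Q → ∀ x, |g P Q x| ≤ |f P x| + |f Q x|) :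
    ∃ c : ℝ, 0 < c ∧
      ∀ (Q : DyCube n) (η : ℝ), η ∈ Set.Ioo (0 : ℝ) 1 →
        ∃ F : ℕ → Set (DyCube n), IsSparseFamily η Q F ∧
          ∀ᵐ x ∂volume, x ∈ Q.set →
            ENNReal.ofReal |f Q x| ≤ ENNReal.ofReal (c * C) *
              (∑' k : ℕ, ∑' P : F k,
                gammaP f g η (P : DyCube n) ^ r *
                  (P : DyCube n).set.indicator (fun _ => (1 : ℝ≥0∞)) x) ^ (1 / r) := by
  classical
  set K : ℝ := 2 ^ (r + 1) + 1 with hK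
  have hKpos : 0 < K := by
    have : (0:ℝ) < 2 ^ (r+1) := Real.rpow_pos_of_pos (by norm_num) _
    linarith
  refine ⟨K ^ (1/r) + 1/C, by positivity, ?_⟩
  intro Q η hη
  obtain ⟨hη0, hη1⟩ := hη
  choose O hOopen hOsub hOvol using fun P : DyCube n => exists_O f g η hη1 P
  have hOm : ∀ P : DyCube n, MeasurableSet (O P) := fun P => (hOopen P).measurableSet
  refine ⟨Fam O Q, ⟨Fam_contracting ⟨hη0, hη1⟩ hOm hOvol, Fam_sparse ⟨hη0, hη1⟩ hOm hOvol⟩, ?_⟩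
  -- countable index type of dyadic subcubes
  haveI : Countable {P : DyCube n // P.IsDyadicSub Q} := (countable_dyadicSubs Q).to_subtype
  set D := {P : DyCube n // P.IsDyadicSub Q}
  set dflt : D := ⟨Q, isDyadicSub_refl Q⟩ with hdflt
  set cl : List D → ℕ → DyCube n := fun l k => ((l.getD k dflt) : D).val with hcl
  -- a.e. event 1 : chains
  have hE1 : ∀ l : List D, ∀ᵐ x ∂volume,
      ((cl l 0).IsDyadicSub Q ∧ ∀ k < l.length - 1, (cl l (k+1)).IsDyadicSub (cl l k)) →
      (x ∈ (cl l (l.length - 1)).set →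
        |f (cl l 0) x| ≤ C * ((∑ k ∈ Finset.range (l.length - 1),
          |g (cl l (k + 1)) (cl l k) x| ^ r) + |f (cl l (l.length - 1)) x| ^ r) ^ (1 / r)) := by
    intro l
    by_cases hh : (cl l 0).IsDyadicSub Q ∧ ∀ k < l.length - 1, (cl l (k+1)).IsDyadicSub (cl l k)
    · filter_upwards [hLr Q (l.length - 1) (cl l) hh.1 hh.2] with x hx _
      exact hx
    · filter_upwards with x hcon
      exact absurd hcon hh
  -- a.e. event 2 : oscillation bounds on selected cubes
  have hE2 : ∀ pr : D × D, ∀ᵐ x ∂volume,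
      ((pr.2 : DyCube n) ∈ Ch (O (pr.1 : DyCube n)) (pr.1 : DyCube n)) →
      (x ∈ (pr.2 : DyCube n).set →
        ENNReal.ofReal |g (pr.2 : DyCube n) (pr.1 : DyCube n) x| ≤
          gammaP f g η (pr.1 : DyCube n) + gammaP f g η (pr.2 : DyCube n)) := by
    intro pr
    by_cases hh : (pr.2 : DyCube n) ∈ Ch (O (pr.1 : DyCube n)) (pr.1 : DyCube n)
    · have hsub := Ch_isDyadicSub hh
      filter_upwards [K2 f g η (hcompat _ _ hsub) hsub (hOsub _) hη0 hη1
        (Ch_parent_bound hη0.le (hOvol _) hh)] with x hx _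
      exact hx
    · filter_upwards with x h
      exact absurd h hh
  -- a.e. event 3 : escape from the intersection
  have hvanish : volume (⋂ k, genUnion (Fam O Q) k) = 0 := by
    have hle : ∀ k, volume (⋂ j, genUnion (Fam O Q) j) ≤
        ENNReal.ofReal (1 - η) ^ k * volume Q.set := fun k =>
      (measure_mono (Set.iInter_subset _ k)).trans (volume_genUnion_le hOm hOvol k)
    have hlt : ENNReal.ofReal (1 - η) < 1 := by
      rw [← ENNReal.ofReal_one]
      exact (ENNReal.ofReal_lt_ofReal_iff (by norm_num)).2 (by linarith)
    have h0 : Filter.Tendsto (fun k => ENNReal.ofReal (1 - η) ^ k * volume Q.set)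
        Filter.atTop (nhds 0) := by
      rw [show (0:ℝ≥0∞) = 0 * volume Q.set by simp]
      exact ENNReal.Tendsto.mul_const (ENNReal.tendsto_pow_atTop_nhds_zero_of_lt_one hlt)
        (Or.inr (volume_set_lt_top Q).ne)
    exact le_antisymm (ge_of_tendsto h0 (Filter.Eventually.of_forall hle)) zero_le
  have hE3 : ∀ᵐ x ∂volume, x ∉ ⋂ k, genUnion (Fam O Q) k := by
    rw [MeasureTheory.ae_iff]
    have hset : {a | ¬ a ∉ ⋂ k, genUnion (Fam O Q) k} = ⋂ k, genUnion (Fam O Q) k := by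
      ext a; simp [not_not]
    rw [hset]
    exact hvanish
  filter_upwards [hE3, ae_all_iff.2 hE1, ae_all_iff.2 hE2] with x hx3 hx1 hx2 hxQ
  -- find the last generation containing x
  have hex : ∃ k, x ∉ genUnion (Fam O Q) k := by
    by_contra hcon
    push_neg at hcon
    exact hx3 (Set.mem_iInter.2 hcon)
  set mm := Nat.find hex with hmm
  have hmm_spec : x ∉ genUnion (Fam O Q) mm := Nat.find_spec hex
  have hmm_pos : 0 < mm := by
    rcases Nat.eq_zero_or_pos mm with h0 | h
    · exfalso
      apply hmm_spec
      rw [h0, genUnion_zero]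
      exact hxQ
    · exact h
  set m := mm - 1 with hm
  have hmm_eq : mm = m + 1 := by omega
  have hxin : ∀ j ≤ m, x ∈ genUnion (Fam O Q) j := by
    intro j hj
    have := Nat.find_min hex (show j < mm by omega)
    exact not_not.1 this
  have hxout : x ∉ genUnion (Fam O Q) (m + 1) := hmm_eq ▸ hmm_spec
  -- the chain of cubes containing x
  have hch : ∀ j, ∃ P : DyCube n, j ≤ m → (P ∈ Fam O Q j ∧ x ∈ P.set) := by
    intro j
    by_cases hj : j ≤ m
    · have hmem := hxin j hj
      simp only [genUnion, Set.mem_iUnion] at hmem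
      obtain ⟨P, hP, hxP⟩ := hmem
      exact ⟨P, fun _ => ⟨hP, hxP⟩⟩
    · exact ⟨Q, fun h => absurd h hj⟩
  choose c hc using hch
  have hc0 : c 0 = Q := by
    have := (hc 0 (Nat.zero_le m)).1
    simpa [Fam] using this
  have hcdy : ∀ j ≤ m, (c j).IsDyadicSub Q := fun j hj => Fam_dyadic j _ (hc j hj).1
  have hsucc : ∀ j < m, c (j + 1) ∈ Ch (O (c j)) (c j) := by
    intro j hj
    have h1 := (hc (j+1) (by omega)).1
    obtain ⟨P', hP', hRch⟩ := h1
    have hP'eq : P' = c j := by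
      by_contra hne
      have hdisj := Fam_disj j hP' (hc j (by omega)).1 hne
      exact (Set.disjoint_left.1 hdisj)
        (isDyadicSub_subset (Ch_isDyadicSub hRch) (hc (j+1) (by omega)).2)
        (hc j (by omega)).2
    rwa [hP'eq] at hRch
  -- apply the chain event
  set l : List D := List.ofFn (fun i : Fin (m+1) => (⟨c i, hcdy i (by omega)⟩ : D)) with hl
  have hlen : l.length = m + 1 := by simp [hl]
  have hclk : ∀ k, k ≤ m → cl l k = c k := by
    intro k hk
    have hk' : k < l.length := by omega
    show ((l.getD k dflt : D) : DyCube n) = c k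
    rw [List.getD_eq_getElem l dflt hk']
    simp only [hl, List.getElem_ofFn]
  have hml : l.length - 1 = m := by omega
  have hhyp : (cl l 0).IsDyadicSub Q ∧ ∀ k < l.length - 1, (cl l (k+1)).IsDyadicSub (cl l k) := by
    constructor
    · rw [hclk 0 (by omega), hc0]
      exact isDyadicSub_refl Q
    · intro k hk
      rw [hml] at hk
      rw [hclk (k+1) (by omega), hclk k (by omega)]
      exact Ch_isDyadicSub (hsucc k hk)
  have hxm : x ∈ (cl l (l.length - 1)).set := by
    rw [hml, hclk m le_rfl]
    exact (hc m le_rfl).2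
  have hreal := hx1 l hhyp hxm
  rw [hml] at hreal
  have hsum_eq : (∑ k ∈ Finset.range m, |g (cl l (k+1)) (cl l k) x| ^ r)
      = ∑ k ∈ Finset.range m, |g (c (k+1)) (c k) x| ^ r := by
    apply Finset.sum_congr rfl
    intro k hk
    rw [Finset.mem_range] at hk
    rw [hclk (k+1) (by omega), hclk k (by omega)]
  rw [hsum_eq, hclk 0 (by omega), hclk m le_rfl, hc0] at hreal
  set γ := gammaP f g η with hγ
  set Sx := ∑' k : ℕ, ∑' P : Fam O Q k, γ (P : DyCube n) ^ r *
      (P : DyCube n).set.indicator (fun _ => (1:ℝ≥0∞)) x with hSx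
  set Z := ∑ k ∈ Finset.range (m+1), γ (c k) ^ r with hZ
  have hZS : Z ≤ Sx := by
    calc Z ≤ ∑ k ∈ Finset.range (m+1), ∑' P : Fam O Q k, γ (P : DyCube n) ^ r *
            (P : DyCube n).set.indicator (fun _ => (1:ℝ≥0∞)) x := by
          apply Finset.sum_le_sum
          intro k hk
          rw [Finset.mem_range] at hk
          have hmem : c k ∈ Fam O Q k := (hc k (by omega)).1
          have hxk : x ∈ (c k).set := (hc k (by omega)).2
          have hle := ENNReal.le_tsum (f := fun P : Fam O Q k => γ (P : DyCube n) ^ r *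
            (P : DyCube n).set.indicator (fun _ => (1:ℝ≥0∞)) x) ⟨c k, hmem⟩
          simpa [Set.indicator_of_mem hxk] using hle
    _ ≤ Sx := ENNReal.sum_le_tsum _
  have hterm : ∀ k < m, ENNReal.ofReal |g (c (k+1)) (c k) x| ≤ γ (c k) + γ (c (k+1)) := by
    intro k hk
    exact hx2 ⟨⟨c k, hcdy k (by omega)⟩, ⟨c (k+1), hcdy (k+1) (by omega)⟩⟩ (hsucc k hk)
      (hc (k+1) (by omega)).2
  have hlast : ENNReal.ofReal |f (c m) x| ≤ γ (c m) := by
    have hxm' : x ∈ (c m).set := (hc m le_rfl).2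
    have hnotO : x ∉ O (c m) := by
      intro hmem
      obtain ⟨R, hRch, hxR⟩ := Ch_cover (hOopen (c m)) hxm' hmem
      apply hxout
      simp only [genUnion, Set.mem_iUnion]
      exact ⟨R, ⟨c m, (hc m le_rfl).1, hRch⟩, hxR⟩
    have hnotE : x ∉ EP f g η (c m) := fun h => hnotO (hOsub _ h)
    refine (not_mem_EP f g η hxm' hnotE).1.trans ?_
    rw [hγ, gammaP_eq]
    exact le_self_add
  have h1r : (0:ℝ) ≤ 1/r := by positivity
  set T : ℝ := (∑ k ∈ Finset.range m, |g (c (k+1)) (c k) x| ^ r) + |f (c m) x| ^ r with hT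
  have hTnn : 0 ≤ T :=
    add_nonneg (Finset.sum_nonneg fun k _ => Real.rpow_nonneg (abs_nonneg _) r)
      (Real.rpow_nonneg (abs_nonneg _) r)
  have hTr : ENNReal.ofReal T ≤ ENNReal.ofReal K * Sx := by
    rw [hT, ENNReal.ofReal_add (Finset.sum_nonneg fun k _ => Real.rpow_nonneg (abs_nonneg _) r)
      (Real.rpow_nonneg (abs_nonneg _) r)]
    rw [ENNReal.ofReal_sum_of_nonneg (fun k _ => Real.rpow_nonneg (abs_nonneg _) r)]
    have hterm' : ∀ k ∈ Finset.range m, ENNReal.ofReal (|g (c (k+1)) (c k) x| ^ r)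
        ≤ 2 ^ r * (γ (c k) ^ r + γ (c (k+1)) ^ r) := by
      intro k hk
      rw [Finset.mem_range] at hk
      rw [← ENNReal.ofReal_rpow_of_nonneg (abs_nonneg _) hr.le]
      exact (ENNReal.rpow_le_rpow (hterm k hk) hr.le).trans (ennreal_add_rpow_le hr.le)
    have hlast' : ENNReal.ofReal (|f (c m) x| ^ r) ≤ γ (c m) ^ r := by
      rw [← ENNReal.ofReal_rpow_of_nonneg (abs_nonneg _) hr.le]
      exact ENNReal.rpow_le_rpow hlast hr.le
    calc (∑ k ∈ Finset.range m, ENNReal.ofReal (|g (c (k+1)) (c k) x| ^ r))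
          + ENNReal.ofReal (|f (c m) x| ^ r)
        ≤ (∑ k ∈ Finset.range m, 2 ^ r * (γ (c k) ^ r + γ (c (k+1)) ^ r)) + γ (c m) ^ r :=
          add_le_add (Finset.sum_le_sum hterm') hlast'
    _ ≤ 2 ^ r * (Z + Z) + Z := by
        apply add_le_add ?_ ?_
        · rw [← Finset.mul_sum]
          apply mul_le_mul_right
          rw [Finset.sum_add_distrib]
          apply add_le_add
          · exact Finset.sum_le_sum_of_subset (Finset.range_subset_range.2 (by omega))
          · calc ∑ k ∈ Finset.range m, γ (c (k+1)) ^ r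
                ≤ γ (c 0) ^ r + ∑ k ∈ Finset.range m, γ (c (k+1)) ^ r := le_add_self
            _ = Z := by rw [hZ, Finset.sum_range_succ', add_comm]
        · exact Finset.single_le_sum (f := fun k => γ (c k) ^ r) (fun _ _ => zero_le)
            (Finset.self_mem_range_succ m)
    _ = (2 ^ r * 2 + 1) * Z := by ring
    _ ≤ ENNReal.ofReal K * Z := by
        apply mul_le_mul_left
        rw [hK, ENNReal.ofReal_add (by positivity) (by norm_num), ENNReal.ofReal_one]
        apply add_le_add ?_ le_rfl
        rw [show (2:ℝ) ^ (r+1) = 2 ^ r * 2 by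
          rw [Real.rpow_add (by norm_num), Real.rpow_one]]
        rw [ENNReal.ofReal_mul (Real.rpow_nonneg (by norm_num) r)]
        rw [← ENNReal.ofReal_rpow_of_pos (by norm_num)]
        gcongr <;> simp [ENNReal.ofReal_ofNat]
    _ ≤ ENNReal.ofReal K * Sx := mul_le_mul_right hZS _
  calc ENNReal.ofReal |f Q x|
      ≤ ENNReal.ofReal (C * T ^ (1/r)) := ENNReal.ofReal_le_ofReal hreal
  _ = ENNReal.ofReal C * ENNReal.ofReal (T ^ (1/r)) := ENNReal.ofReal_mul hC.le
  _ = ENNReal.ofReal C * ENNReal.ofReal T ^ (1/r) := by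
      rw [ENNReal.ofReal_rpow_of_nonneg hTnn h1r]
  _ ≤ ENNReal.ofReal C * (ENNReal.ofReal K * Sx) ^ (1/r) :=
      mul_le_mul_right (ENNReal.rpow_le_rpow hTr h1r) _
  _ = ENNReal.ofReal C * (ENNReal.ofReal K) ^ (1/r) * Sx ^ (1/r) := by
      rw [ENNReal.mul_rpow_of_nonneg _ _ h1r, mul_assoc]
  _ = ENNReal.ofReal (C * K ^ (1/r)) * Sx ^ (1/r) := by
      rw [ENNReal.ofReal_rpow_of_pos hKpos, ← ENNReal.ofReal_mul hC.le]
  _ ≤ ENNReal.ofReal ((K ^ (1/r) + 1/C) * C) * Sx ^ (1/r) := by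
      apply mul_le_mul_left
      apply ENNReal.ofReal_le_ofReal
      have heq : (K ^ (1/r) + 1/C) * C = C * K ^ (1/r) + 1 := by
        field_simp
      rw [heq]
      linarith [Real.rpow_nonneg hKpos.le (1/r)]
end

section
/- Let 0 < γ < n, q ∈ (0,∞), let μ be a nonnegative Borel measure on ℝⁿ and 𝒟 a dyadic lattice. Define the nonlinear dyadic potential T_{q,γ}(μ) = (∑_{Q∈𝒟} (μ(Q)/|Q|^{1−γ/n})^q χ_Q)^{1/q} and the fractional maximal function M_γ(μ) = sup_{Q∈𝒟} (μ(Q)/|Q|^{1−γ/n}) χ_Q. Then there exist constants C₁, C₂ > 0 (depending on n, γ, q) such that for all λ > 0 and 0 < ε < 1: |{x : T_{q,γ}(μ)(x) > 2λ, M_γ(μ)(x) ≤ ελ}| ≤ C₁ e^{−C₂/ε^q} |{x : T_{q,γ}(μ)(x) > λ}|. -/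
open MeasureTheory ENNReal Filter

/-- A dyadic lattice: closed under dyadic subdivision, any two cubes have a common dyadic
ancestor, and every compact set is contained in some cube of the lattice. -/
def IsDyadicLattice {n : ℕ} (D : Set (DyCube n)) : Prop :=
  (∀ Q ∈ D, ∀ P : DyCube n, P.IsDyadicSub Q → P ∈ D) ∧
  (∀ Q ∈ D, ∀ Q' ∈ D, ∃ R ∈ D, Q.IsDyadicSub R ∧ Q'.IsDyadicSub R) ∧
  ∀ K : Set (Fin n → ℝ), IsCompact K → ∃ Q ∈ D, K ⊆ Q.set

/-- The nonlinear dyadic potential `T_{q,γ}(μ) = (∑_{Q ∈ 𝒟} (μ(Q)/|Q|^{1−γ/n})^q χ_Q)^{1/q}`. -/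
noncomputable def dyadicPot {n : ℕ} (D : Set (DyCube n)) (μ : Measure (Fin n → ℝ)) (γ q : ℝ)
    (x : Fin n → ℝ) : ℝ≥0∞ :=
  (∑' Q : D, (Q : DyCube n).set.indicator
      (fun _ => (μ (Q : DyCube n).set / volume (Q : DyCube n).set ^ (1 - γ / (n : ℝ))) ^ q) x) ^
    (1 / q)

/-- The dyadic fractional maximal function `M_γ(μ) = sup_{Q ∈ 𝒟} (μ(Q)/|Q|^{1−γ/n}) χ_Q`. -/
noncomputable def dyadicFracM {n : ℕ} (D : Set (DyCube n)) (μ : Measure (Fin n → ℝ)) (γ : ℝ)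
    (x : Fin n → ℝ) : ℝ≥0∞ :=
  ⨆ Q : D, (Q : DyCube n).set.indicator
    (fun _ => μ (Q : DyCube n).set / volume (Q : DyCube n).set ^ (1 - γ / (n : ℝ))) x

open scoped Classical

namespace GLam

variable {n : ℕ}

theorem DyCube.ext' {P Q : DyCube n} (hc : P.corner = Q.corner) (hs : P.side = Q.side) :
    P = Q := by
  cases P; cases Q; simp_all

/-- The subcube of `P` at level `k` with position `m`. -/
noncomputable def sc (P : DyCube n) (k : ℕ) (m : Fin n → ℕ) : DyCube n :=
  ⟨fun i => P.corner i + m i * (P.side / 2 ^ k), P.side / 2 ^ k, by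
    have := P.side_pos; positivity⟩

theorem sc_side (P : DyCube n) (k : ℕ) (m : Fin n → ℕ) : (sc P k m).side = P.side / 2 ^ k := rfl

theorem sub_iff {P Q : DyCube n} :
    P.IsDyadicSub Q ↔ ∃ k : ℕ, ∃ m : Fin n → ℕ, (∀ i, m i < 2 ^ k) ∧ P = sc Q k m := by
  constructor
  · rintro ⟨k, m, hm, hs, hc⟩
    exact ⟨k, m, hm, DyCube.ext' (funext hc) hs⟩
  · rintro ⟨k, m, hm, rfl⟩
    exact ⟨k, m, hm, rfl, fun i => rfl⟩

theorem sc_sub {Q : DyCube n} {k : ℕ} {m : Fin n → ℕ} (hm : ∀ i, m i < 2 ^ k) :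
    (sc Q k m).IsDyadicSub Q := sub_iff.2 ⟨k, m, hm, rfl⟩

theorem sub_refl (P : DyCube n) : P.IsDyadicSub P := by
  refine ⟨0, fun _ => 0, by simp, by simp, fun i => by simp⟩

theorem sc_sc (Q : DyCube n) (k k' : ℕ) (m m' : Fin n → ℕ) :
    sc (sc Q k m) k' m' = sc Q (k + k') (fun i => m i * 2 ^ k' + m' i) := by
  refine DyCube.ext' (funext fun i => ?_) ?_
  · show Q.corner i + m i * (Q.side / 2 ^ k) + m' i * (Q.side / 2 ^ k / 2 ^ k')
        = Q.corner i + (m i * 2 ^ k' + m' i : ℕ) * (Q.side / 2 ^ (k + k'))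
    push_cast
    rw [pow_add]
    field_simp
    ring
  · show Q.side / 2 ^ k / 2 ^ k' = Q.side / 2 ^ (k + k')
    rw [pow_add, div_div]

theorem sub_trans {P Q R : DyCube n} (h1 : P.IsDyadicSub Q) (h2 : Q.IsDyadicSub R) :
    P.IsDyadicSub R := by
  obtain ⟨k, m, hm, rfl⟩ := sub_iff.1 h1
  obtain ⟨k', m', hm', rfl⟩ := sub_iff.1 h2
  rw [sc_sc]
  refine sc_sub fun i => ?_
  have := hm' i; have := hm i
  calc m' i * 2 ^ k + m i < m' i * 2 ^ k + 2 ^ k := by omega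
    _ = (m' i + 1) * 2 ^ k := by ring
    _ ≤ 2 ^ k' * 2 ^ k := by
        exact Nat.mul_le_mul_right _ (by omega)
    _ = 2 ^ (k' + k) := (pow_add 2 k' k).symm

theorem side_pos (P : DyCube n) : 0 < P.side := P.side_pos

theorem sub_side_le {P Q : DyCube n} (h : P.IsDyadicSub Q) : P.side ≤ Q.side := by
  obtain ⟨k, m, hm, rfl⟩ := sub_iff.1 h
  rw [sc_side]
  exact div_le_self Q.side_pos.le (one_le_pow₀ (by norm_num))

theorem eq_of_sub_of_side {P Q : DyCube n} (h : P.IsDyadicSub Q) (hs : Q.side ≤ P.side) :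
    P = Q := by
  obtain ⟨k, m, hm, rfl⟩ := sub_iff.1 h
  rw [sc_side] at hs
  have h2 : (2:ℝ) ^ k ≤ 1 := by
    rw [le_div_iff₀ (by positivity : (0:ℝ) < 2 ^ k)] at hs
    nlinarith [Q.side_pos]
  have hk : k = 0 := by
    by_contra hk
    have : (2:ℝ) ^ 1 ≤ (2:ℝ) ^ k := by
      apply pow_le_pow_right₀ (by norm_num) (by omega)
    norm_num at this; linarith
  subst hk
  have hm0 : ∀ i, m i = 0 := fun i => by have := hm i; omega
  refine DyCube.ext' (funext fun i => ?_) ?_ <;> simp [sc, hm0]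

theorem sub_antisymm {P Q : DyCube n} (h1 : P.IsDyadicSub Q) (h2 : Q.IsDyadicSub P) : P = Q :=
  eq_of_sub_of_side h1 (sub_side_le h2)

theorem sub_set_subset {P Q : DyCube n} (h : P.IsDyadicSub Q) : P.set ⊆ Q.set := by
  obtain ⟨k, m, hm, rfl⟩ := sub_iff.1 h
  intro x hx
  intro i _
  have hxi := hx i (Set.mem_univ i)
  simp only [sc, Set.mem_Ico] at hxi ⊢
  have h2 : (0:ℝ) < 2 ^ k := by positivity
  have hQ := Q.side_pos
  have hmi : (m i : ℝ) + 1 ≤ 2 ^ k := by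
    have := hm i
    exact_mod_cast Nat.succ_le_of_lt this
  constructor
  · nlinarith [hxi.1, mul_nonneg (Nat.cast_nonneg (m i)) (div_nonneg hQ.le h2.le)]
  · have : (m i : ℝ) * (Q.side / 2 ^ k) + Q.side / 2 ^ k ≤ Q.side := by
      have : ((m i : ℝ) + 1) * (Q.side / 2 ^ k) ≤ 2 ^ k * (Q.side / 2 ^ k) := by
        apply mul_le_mul_of_nonneg_right hmi (by positivity)
      rw [mul_div_cancel₀] at this
      · linarith [this]
      · positivity
    linarith [hxi.2]

theorem set_nonempty (P : DyCube n) : P.set.Nonempty := by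
  refine ⟨P.corner, fun i _ => ?_⟩
  simp [Set.mem_Ico, P.side_pos]

end GLam

-- chunk 2: nestedness and partition
namespace GLam

variable {n : ℕ}

/-- Two dyadic subcubes of a common cube whose sets intersect are nested. -/
theorem nested_of_inter {P Q T : DyCube n} (hP : P.IsDyadicSub T) (hQ : Q.IsDyadicSub T)
    (hx : (P.set ∩ Q.set).Nonempty) : P.IsDyadicSub Q ∨ Q.IsDyadicSub P := by
  -- reduce to WLOG statement
  obtain ⟨x, hxP, hxQ⟩ := hx
  -- auxiliary claim: if levels k ≤ k' then the deeper is a sub of the shallower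
  suffices H : ∀ (k k' : ℕ) (m m' : Fin n → ℕ), (∀ i, m i < 2 ^ k) → (∀ i, m' i < 2 ^ k') →
      k ≤ k' → x ∈ (sc T k m).set → x ∈ (sc T k' m').set →
      (sc T k' m').IsDyadicSub (sc T k m) by
    obtain ⟨k, m, hm, rfl⟩ := sub_iff.1 hP
    obtain ⟨k', m', hm', rfl⟩ := sub_iff.1 hQ
    rcases le_total k k' with h | h
    · exact Or.inr (H k k' m m' hm hm' h hxP hxQ)
    · exact Or.inl (H k' k m' m hm' hm h hxQ hxP)
  intro k k' m m' hm hm' hkk hxm hxm'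
  have hT := T.side_pos
  have h2k : (0:ℝ) < 2 ^ k := by positivity
  have h2k' : (0:ℝ) < 2 ^ k' := by positivity
  -- coordinatewise: m i * 2^(k'-k) ≤ m' i < (m i + 1) * 2^(k'-k)
  have key : ∀ i, m i * 2 ^ (k' - k) ≤ m' i ∧ m' i < (m i + 1) * 2 ^ (k' - k) := by
    intro i
    have h1 := hxm i (Set.mem_univ i)
    have h2 := hxm' i (Set.mem_univ i)
    simp only [sc, Set.mem_Ico] at h1 h2
    set h := T.side / 2 ^ k' with hh
    have hhpos : 0 < h := by positivity
    have hH : T.side / 2 ^ k = 2 ^ (k' - k) * h := by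
      rw [hh, ← Nat.sub_add_cancel hkk, pow_add]
      field_simp
      ring
      simp
    rw [hH] at h1
    -- h1 : T.corner i + m i * (2^(k'-k) * h) ≤ x i < T.corner i + m i * (2^(k'-k)*h) + 2^(k'-k)*h
    -- h2 : T.corner i + m' i * h ≤ x i < T.corner i + m' i * h + h
    constructor
    · -- m i * 2^(k'-k) * h ≤ x - c < m' i * h + h  ⇒ m i * 2^(k'-k) < m' i + 1
      have : (m i : ℝ) * 2 ^ (k' - k) * h < (m' i + 1) * h := by nlinarith [h1.1, h2.2]
      have : (m i : ℝ) * 2 ^ (k' - k) < m' i + 1 := by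
        exact lt_of_mul_lt_mul_right (by linarith [this]) hhpos.le
      have : (m i * 2 ^ (k' - k) : ℕ) < m' i + 1 := by exact_mod_cast (by push_cast; linarith : ((m i * 2 ^ (k' - k) : ℕ) : ℝ) < ((m' i + 1 : ℕ) : ℝ))
      omega
    · -- m' i * h ≤ x - c < (m i + 1) * 2^(k'-k) * h
      have : (m' i : ℝ) * h < ((m i + 1) * 2 ^ (k' - k)) * h := by nlinarith [h2.1, h1.2]
      have : (m' i : ℝ) < (m i + 1) * 2 ^ (k' - k) := lt_of_mul_lt_mul_right (by linarith [this]) hhpos.le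
      exact_mod_cast (by push_cast; linarith : ((m' i : ℕ) : ℝ) < (((m i + 1) * 2 ^ (k' - k) : ℕ) : ℝ))
  -- now exhibit the dyadic sub relation
  rw [sub_iff]
  refine ⟨k' - k, fun i => m' i - m i * 2 ^ (k' - k), fun i => ?_, ?_⟩
  · show m' i - m i * 2 ^ (k' - k) < 2 ^ (k' - k)
    have h1 := (key i).1
    have h2 := (key i).2
    have h3 : (m i + 1) * 2 ^ (k' - k) = m i * 2 ^ (k' - k) + 2 ^ (k' - k) := by ring
    omega
  · refine DyCube.ext' (funext fun i => ?_) ?_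
    · show T.corner i + m' i * (T.side / 2 ^ k') =
        (T.corner i + m i * (T.side / 2 ^ k)) +
          ((m' i - m i * 2 ^ (k' - k) : ℕ) : ℝ) * (T.side / 2 ^ k / 2 ^ (k' - k))
      have hcast : ((m' i - m i * 2 ^ (k' - k) : ℕ) : ℝ) = (m' i : ℝ) - m i * 2 ^ (k' - k) := by
        have := (key i).1
        push_cast [Nat.cast_sub this]
        ring
      rw [hcast]
      have hsplit : (2:ℝ) ^ k' = 2 ^ k * 2 ^ (k' - k) := by
        rw [← pow_add]; congr 1; omega
      rw [hsplit]
      field_simp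
      ring
    · show T.side / 2 ^ k' = T.side / 2 ^ k / 2 ^ (k' - k)
      rw [div_div, ← pow_add]
      congr 2
      omega

/-- Given `x ∈ P.set` and a level `k`, `x` belongs to some level-`k` subcube. -/
theorem exists_mem_sc {P : DyCube n} {x : Fin n → ℝ} (hx : x ∈ P.set) (k : ℕ) :
    ∃ m : Fin n → ℕ, (∀ i, m i < 2 ^ k) ∧ x ∈ (sc P k m).set := by
  have hP := P.side_pos
  have hhpos : 0 < P.side / 2 ^ k := div_pos hP (by positivity)
  refine ⟨fun i => ⌊(x i - P.corner i) / (P.side / 2 ^ k)⌋₊, fun i => ?_, fun i _ => ?_⟩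
  · have hxi := hx i (Set.mem_univ i)
    simp only [Set.mem_Ico] at hxi
    rw [Nat.floor_lt (div_nonneg (by linarith [hxi.1]) hhpos.le)]
    rw [div_lt_iff₀ hhpos]
    push_cast
    have h2 : (2:ℝ) ^ k * (P.side / 2 ^ k) = P.side := by field_simp
    nlinarith [hxi.2]
  · have hxi := hx i (Set.mem_univ i)
    simp only [Set.mem_Ico] at hxi
    have h0 : (0:ℝ) ≤ (x i - P.corner i) / (P.side / 2 ^ k) := by
      apply div_nonneg _ hhpos.le; linarith [hxi.1]
    have hfl := Nat.floor_le h0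
    have hfl2 := Nat.lt_floor_add_one ((x i - P.corner i) / (P.side / 2 ^ k))
    rw [le_div_iff₀ hhpos] at hfl
    rw [div_lt_iff₀ hhpos] at hfl2
    simp only [sc, Set.mem_Ico]
    constructor
    · linarith [hfl]
    · nlinarith [hfl2]

theorem sc_disjoint {P : DyCube n} {k : ℕ} {m m' : Fin n → ℕ} (hne : m ≠ m') :
    Disjoint (sc P k m).set (sc P k m').set := by
  rw [Set.disjoint_left]
  rintro x hx hx'
  apply hne
  funext i
  have h1 := hx i (Set.mem_univ i)
  have h2 := hx' i (Set.mem_univ i)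
  simp only [sc, Set.mem_Ico] at h1 h2
  have hhpos : 0 < P.side / 2 ^ k := by have := P.side_pos; positivity
  by_contra hne'
  rcases Nat.lt_or_ge (m i) (m' i) with h | h
  · have : (m i : ℝ) + 1 ≤ m' i := by exact_mod_cast h
    nlinarith [h1.2, h2.1]
  · have h' : m' i < m i := by omega
    have : (m' i : ℝ) + 1 ≤ m i := by exact_mod_cast h'
    nlinarith [h2.2, h1.1]

end GLam

-- chunk 3: measure facts, parent, countability
namespace GLam

variable {n : ℕ}

theorem cube_measurable (P : DyCube n) : MeasurableSet P.set :=
  MeasurableSet.univ_pi fun _ => measurableSet_Ico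

theorem vol_cube (P : DyCube n) : volume P.set = ENNReal.ofReal (P.side ^ n) := by
  rw [DyCube.set, volume_pi_pi]
  simp only [Real.volume_Ico, add_sub_cancel_left]
  rw [Finset.prod_const, ← ENNReal.ofReal_pow P.side_pos.le]
  simp

theorem vol_sc (P : DyCube n) (k : ℕ) (m : Fin n → ℕ) :
    volume (sc P k m).set = ENNReal.ofReal ((P.side / 2 ^ k) ^ n) := vol_cube _

theorem sub_of_inter_side_le {R R' T : DyCube n} (hR : R.IsDyadicSub T) (hR' : R'.IsDyadicSub T)
    (hx : (R.set ∩ R'.set).Nonempty) (hs : R.side ≤ R'.side) : R.IsDyadicSub R' := by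
  rcases nested_of_inter hR hR' hx with h | h
  · exact h
  · rw [eq_of_sub_of_side h hs]
    exact sub_refl _

/-- Parent of a strict dyadic subcube. -/
theorem exists_parent {P Q : DyCube n} (h : P.IsDyadicSub Q) (hne : P ≠ Q) :
    ∃ R : DyCube n, R.side = 2 * P.side ∧ P.IsDyadicSub R ∧ P ≠ R ∧ R.IsDyadicSub Q := by
  obtain ⟨k, m, hm, rfl⟩ := sub_iff.1 h
  have hk : k ≠ 0 := by
    rintro rfl
    apply hne
    refine DyCube.ext' (funext fun i => ?_) ?_
    · have : m i = 0 := by have := hm i; omega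
      simp [sc, this]
    · simp [sc_side]
  obtain ⟨j, rfl⟩ : ∃ j, k = j + 1 := ⟨k - 1, by omega⟩
  have hQ := Q.side_pos
  refine ⟨sc Q j (fun i => m i / 2), ?_, ?_, ?_, sc_sub fun i => ?_⟩
  · rw [sc_side, sc_side, pow_add]
    ring
  · rw [sub_iff]
    refine ⟨1, fun i => m i % 2, fun i => by simpa using Nat.mod_lt (m i) (by norm_num : 0 < 2), ?_⟩
    rw [sc_sc]
    congr 1
    funext i
    have := Nat.div_add_mod (m i) 2
    omega
  · intro hcontra
    have h1 : (sc Q (j + 1) m).side = (sc Q j fun i => m i / 2).side := by rw [← hcontra]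
    rw [sc_side, sc_side, pow_add] at h1
    have h2 : (0:ℝ) < 2 ^ j := by positivity
    rw [div_eq_div_iff (by positivity) (by positivity)] at h1
    nlinarith
  · have := hm i
    rw [Nat.div_lt_iff_lt_mul (by norm_num)]
    calc m i < 2 ^ (j + 1) := this
      _ = 2 ^ j * 2 := by rw [pow_add]; ring

/-- A dyadic lattice is countable. -/
theorem lattice_countable {D : Set (DyCube n)} (hD : IsDyadicLattice D) : D.Countable := by
  rcases Set.eq_empty_or_nonempty D with rfl | ⟨Q₀, hQ₀⟩
  · exact Set.countable_empty
  rw [← Set.countable_coe_iff]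
  have hQ₀s := Q₀.side_pos
  have hsel : ∀ Q : D, ∃ p : (ℕ × (Fin n → ℕ)) × (ℕ × (Fin n → ℕ)),
      (Q : DyCube n) = sc ⟨fun i => Q₀.corner i - p.1.2 i * Q₀.side, Q₀.side * 2 ^ p.1.1,
        by positivity⟩ p.2.1 p.2.2 := by
    rintro ⟨Q, hQ⟩
    obtain ⟨R, hR, hQR, hQ₀R⟩ := hD.2.1 Q hQ Q₀ hQ₀
    obtain ⟨k, m, hm, hQe⟩ := sub_iff.1 hQR
    obtain ⟨k', m', hm', hQ₀e⟩ := sub_iff.1 hQ₀R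
    refine ⟨((k', m'), (k, m)), ?_⟩
    have hside : Q₀.side = R.side / 2 ^ k' := by rw [hQ₀e, sc_side]
    have hcorner : ∀ i, Q₀.corner i = R.corner i + m' i * (R.side / 2 ^ k') := by
      intro i; rw [hQ₀e]; rfl
    have hRrec : (⟨fun i => Q₀.corner i - m' i * Q₀.side, Q₀.side * 2 ^ k',
        by positivity⟩ : DyCube n) = R := by
      refine DyCube.ext' (funext fun i => ?_) ?_
      · show Q₀.corner i - m' i * Q₀.side = R.corner i
        rw [hcorner i, hside]; ring
      · show Q₀.side * 2 ^ k' = R.side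
        rw [hside]; field_simp
    simpa [hRrec] using hQe
  choose F hF using hsel
  have hinj : Function.Injective F := by
    intro Q Q' hFe
    have := hF Q
    rw [hFe, ← hF Q'] at this
    exact Subtype.ext this
  exact hinj.countable

end GLam

-- chunk 4: partition measure, power mean, core sum definitions
namespace GLam

variable {n : ℕ}

/-- The level-`k` subcubes of `P` partition `P.set`. -/
theorem set_eq_biUnion (P : DyCube n) (k : ℕ) :
    P.set = ⋃ m ∈ (Finset.univ : Finset (Fin n → Fin (2 ^ k))),
      (sc P k (fun i => (m i : ℕ))).set := by
  ext x
  simp only [Set.mem_iUnion, Finset.mem_univ, exists_prop, true_and]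
  constructor
  · intro hx
    obtain ⟨m, hm, hmem⟩ := exists_mem_sc hx k
    exact ⟨fun i => ⟨m i, hm i⟩, hmem⟩
  · rintro ⟨m, hm⟩
    exact sub_set_subset (sc_sub fun i => (m i).2) hm

theorem meas_partition (ν : Measure (Fin n → ℝ)) (P : DyCube n) (k : ℕ) :
    ν P.set = ∑ m : Fin n → Fin (2 ^ k), ν (sc P k (fun i => (m i : ℕ))).set := by
  rw [set_eq_biUnion P k]
  rw [measure_biUnion_finset ?_ (fun m _ => cube_measurable _)]
  · intro m _ m' _ hne
    apply sc_disjoint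
    intro hc
    apply hne
    funext i
    exact Fin.ext (congrFun hc i)

/-- Power mean inequality. -/
theorem pow_mean {ι : Type*} (s : Finset ι) (f : ι → ℝ≥0∞) {δ : ℝ} (hδ0 : 0 < δ) (hδ1 : δ ≤ 1) :
    ∑ i ∈ s, f i ^ δ ≤ (s.card : ℝ≥0∞) ^ (1 - δ) * (∑ i ∈ s, f i) ^ δ := by
  rcases Finset.eq_empty_or_nonempty s with rfl | hs
  · simp
  have hcard : (0:ℝ≥0∞) < s.card := by
    simp [Finset.card_pos.2 hs]
  have hcne : (s.card : ℝ≥0∞) ≠ 0 := hcard.ne'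
  have hctop : (s.card : ℝ≥0∞) ≠ ⊤ := ENNReal.natCast_ne_top _
  have hw : ∑ _i ∈ s, (s.card : ℝ≥0∞)⁻¹ = 1 := by
    rw [Finset.sum_const, nsmul_eq_mul, ENNReal.mul_inv_cancel hcne hctop]
  have key := ENNReal.rpow_arith_mean_le_arith_mean_rpow s (fun _ => (s.card : ℝ≥0∞)⁻¹)
    (fun i => f i ^ δ) hw (p := 1 / δ) (by rw [le_div_iff₀ hδ0]; linarith)
  -- key : (∑ (card)⁻¹ * f i ^ δ) ^ (1/δ) ≤ ∑ (card)⁻¹ * (f i ^ δ) ^ (1/δ)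
  have hsimp : ∀ i, ((f i ^ δ) ^ (1/δ) : ℝ≥0∞) = f i := by
    intro i
    rw [← ENNReal.rpow_mul, mul_one_div, div_self hδ0.ne', ENNReal.rpow_one]
  simp only [hsimp] at key
  rw [← Finset.mul_sum, ← Finset.mul_sum] at key
  -- key : ((card)⁻¹ * ∑ f^δ) ^ (1/δ) ≤ (card)⁻¹ * ∑ f
  have key2 := ENNReal.rpow_le_rpow key hδ0.le
  rw [← ENNReal.rpow_mul, one_div, inv_mul_cancel₀ hδ0.ne', ENNReal.rpow_one] at key2
  -- key2 : (card)⁻¹ * ∑ f^δ ≤ ((card)⁻¹ * ∑ f) ^ δ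
  rw [ENNReal.mul_rpow_of_nonneg _ _ hδ0.le] at key2
  -- key2 : (card)⁻¹ * ∑ f^δ ≤ (card⁻¹)^δ * (∑ f) ^ δ
  calc ∑ i ∈ s, f i ^ δ
      = (s.card : ℝ≥0∞) * ((s.card : ℝ≥0∞)⁻¹ * ∑ i ∈ s, f i ^ δ) := by
        rw [← mul_assoc, ENNReal.mul_inv_cancel hcne hctop, one_mul]
    _ ≤ (s.card : ℝ≥0∞) * (((s.card : ℝ≥0∞)⁻¹) ^ δ * (∑ i ∈ s, f i) ^ δ) :=
        mul_le_mul_right key2 _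
    _ = (s.card : ℝ≥0∞) ^ (1 - δ) * (∑ i ∈ s, f i) ^ δ := by
        rw [← mul_assoc, ENNReal.inv_rpow, ENNReal.rpow_sub 1 δ hcne hctop, ENNReal.rpow_one,
          div_eq_mul_inv]

end GLam

-- chunk 5: core definitions and sum lemmas
namespace GLam

variable {n : ℕ} (D : Set (DyCube n)) (μ : Measure (Fin n → ℝ)) (γ q : ℝ)

/-- `if`-indicator with a fixed (classical) decidability instance. -/
noncomputable def ind (p : Prop) (a : ℝ≥0∞) : ℝ≥0∞ := if p then a else 0

theorem ind_of {p : Prop} {a : ℝ≥0∞} (h : p) : ind p a = a := if_pos h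

theorem ind_not_of {p : Prop} {a : ℝ≥0∞} (h : ¬p) : ind p a = 0 := if_neg h

theorem ind_le_ind {p p' : Prop} {a b : ℝ≥0∞} (h : p → p') (hab : a ≤ b) :
    ind p a ≤ ind p' b := by
  rw [ind, ind]
  split
  · rename_i hp
    rw [if_pos (h hp)]
    exact hab
  · exact zero_le

theorem ind_eq_zero {p : Prop} {a : ℝ≥0∞} (h : p → False) : ind p a = 0 :=
  ind_not_of h

/-- `α(Q) = μ(Q)/|Q|^{1-γ/n}`. -/
noncomputable def al (Q : DyCube n) : ℝ≥0∞ :=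
  μ Q.set / volume Q.set ^ (1 - γ / (n : ℝ))

/-- `β(Q) = α(Q)^q`. -/
noncomputable def be (Q : DyCube n) : ℝ≥0∞ := al μ γ Q ^ q

/-- Sum of `β(Q) χ_Q(x)` over cubes of `D` satisfying a predicate. -/
noncomputable def locS (c : DyCube n → Prop) (x : Fin n → ℝ) : ℝ≥0∞ :=
  ∑' Q : D, ind (c (Q : DyCube n) ∧ x ∈ (Q : DyCube n).set) (be μ γ q (Q : DyCube n))

/-- Sum of `β(Q)` over cubes of `D` satisfying a predicate and containing `P`. -/
noncomputable def anc (c : DyCube n → Prop) (P : DyCube n) : ℝ≥0∞ :=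
  ∑' Q : D, ind (c (Q : DyCube n) ∧ P.IsDyadicSub (Q : DyCube n)) (be μ γ q (Q : DyCube n))

variable {D μ γ q}

theorem pot_eq (x : Fin n → ℝ) :
    dyadicPot D μ γ q x = (locS D μ γ q (fun _ => True) x) ^ (1 / q) := by
  rw [dyadicPot, locS]
  congr 1
  apply tsum_congr
  intro Q
  rw [Set.indicator_apply, ind]
  simp only [true_and]
  split <;> rfl

theorem al_le_M {Q : DyCube n} (hQ : Q ∈ D) {y : Fin n → ℝ} (hy : y ∈ Q.set) :
    al μ γ Q ≤ dyadicFracM D μ γ y := by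
  have : al μ γ Q = (Q : DyCube n).set.indicator
      (fun _ => μ Q.set / volume Q.set ^ (1 - γ / (n : ℝ))) y := by
    rw [Set.indicator_of_mem hy]; rfl
  rw [this]
  exact le_iSup (fun R : D => (R : DyCube n).set.indicator
    (fun _ => μ (R : DyCube n).set / volume (R : DyCube n).set ^ (1 - γ / (n : ℝ))) y) ⟨Q, hQ⟩

theorem anc_le_locS {c : DyCube n → Prop} {P : DyCube n} {y : Fin n → ℝ} (hy : y ∈ P.set) :
    anc D μ γ q c P ≤ locS D μ γ q c y := by
  apply ENNReal.tsum_le_tsum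
  intro Q
  exact ind_le_ind (fun h => ⟨h.1, sub_set_subset h.2 hy⟩) le_rfl

theorem locS_mono_pred {c c' : DyCube n → Prop} (h : ∀ Q, c Q → c' Q) (x : Fin n → ℝ) :
    locS D μ γ q c x ≤ locS D μ γ q c' x := by
  apply ENNReal.tsum_le_tsum
  intro Q
  exact ind_le_ind (fun hc => ⟨h _ hc.1, hc.2⟩) le_rfl

/-- Decomposition of a local sum at a point of `P` into the part below `P` and the
strict-ancestor part. -/
theorem locS_decomp {c : DyCube n → Prop} {P : DyCube n} {x : Fin n → ℝ} (hx : x ∈ P.set)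
    (h : ∀ Q ∈ D, c Q → x ∈ Q.set → Q.IsDyadicSub P ∨ (P.IsDyadicSub Q ∧ P ≠ Q)) :
    locS D μ γ q c x = locS D μ γ q (fun Q => c Q ∧ Q.IsDyadicSub P) x +
      ∑' Q : D, ind (c (Q : DyCube n) ∧ P.IsDyadicSub (Q : DyCube n) ∧ P ≠ (Q : DyCube n))
        (be μ γ q (Q : DyCube n)) := by
  rw [locS, locS, ← ENNReal.tsum_add]
  apply tsum_congr
  rintro ⟨Q, hQ⟩
  simp only [ind]
  by_cases hc : c Q ∧ x ∈ Q.set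
  · rw [if_pos hc]
    rcases h Q hQ hc.1 hc.2 with hsub | ⟨hsub, hne⟩
    · rw [if_pos ⟨⟨hc.1, hsub⟩, hc.2⟩, if_neg, add_zero]
      rintro ⟨-, hPQ, hPne⟩
      exact hPne (sub_antisymm hPQ hsub)
    · rw [if_neg, if_pos ⟨hc.1, hsub, hne⟩, zero_add]
      rintro ⟨⟨-, hQP⟩, -⟩
      exact hne (sub_antisymm hsub hQP)
  · rw [if_neg hc, if_neg, if_neg, add_zero]
    · rintro ⟨hcQ, hPQ, -⟩
      exact hc ⟨hcQ, sub_set_subset hPQ hx⟩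
    · rintro ⟨⟨hcQ, -⟩, hxQ⟩
      exact hc ⟨hcQ, hxQ⟩

/-- If a local sum at `x` exceeds `t`, some cube of `D` containing `x` has ancestor-sum
exceeding `t`. -/
theorem exists_anc_gt {c : DyCube n → Prop} {x : Fin n → ℝ} {t : ℝ≥0∞}
    (hc : ∀ Q ∈ D, ∀ Q' ∈ D, c Q → c Q' → x ∈ Q.set → x ∈ Q'.set →
      Q.IsDyadicSub Q' ∨ Q'.IsDyadicSub Q)
    (ht : t < locS D μ γ q c x) :
    ∃ P ∈ D, x ∈ P.set ∧ c P ∧ t < anc D μ γ q c P := by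
  rw [locS, ENNReal.tsum_eq_iSup_sum] at ht
  obtain ⟨s, hs⟩ := lt_iSup_iff.mp ht
  set f : D → ℝ≥0∞ :=
    fun Q => ind (c (Q : DyCube n) ∧ x ∈ (Q : DyCube n).set) (be μ γ q (Q : DyCube n))
    with hf
  set s' : Finset D := s.filter (fun Q => c (Q : DyCube n) ∧ x ∈ (Q : DyCube n).set) with hs'
  have hsum : ∑ Q ∈ s', f Q = ∑ Q ∈ s, f Q := by
    apply Finset.sum_filter_of_ne
    intro Q _ hne
    by_contra hcc
    exact hne (ind_not_of hcc)
  have hs'ne : s'.Nonempty := by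
    rcases Finset.eq_empty_or_nonempty s' with he | hne
    · exfalso
      rw [he] at hsum
      simp at hsum
      rw [← hsum] at hs
      exact (not_lt.2 (zero_le : (0:ℝ≥0∞) ≤ t)) hs
    · exact hne
  obtain ⟨P, hPs', hPmin⟩ := Finset.exists_min_image s' (fun Q => (Q : DyCube n).side) hs'ne
  have hPprop : c (P : DyCube n) ∧ x ∈ (P : DyCube n).set := (Finset.mem_filter.1 hPs').2
  refine ⟨(P : DyCube n), P.2, hPprop.2, hPprop.1, ?_⟩
  have hPsub : ∀ Q ∈ s', (P : DyCube n).IsDyadicSub (Q : DyCube n) := by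
    intro Q hQ
    have hQprop := (Finset.mem_filter.1 hQ).2
    rcases hc _ P.2 _ Q.2 hPprop.1 hQprop.1 hPprop.2 hQprop.2 with h | h
    · exact h
    · rw [eq_of_sub_of_side h (hPmin Q hQ)]
      exact sub_refl _
  calc t < ∑ Q ∈ s, f Q := hs
    _ = ∑ Q ∈ s', f Q := hsum.symm
    _ ≤ ∑ Q ∈ s', ind (c (Q : DyCube n) ∧ (P : DyCube n).IsDyadicSub (Q : DyCube n))
        (be μ γ q (Q : DyCube n)) := by
        apply Finset.sum_le_sum
        intro Q hQ
        have hQprop := (Finset.mem_filter.1 hQ).2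
        rw [hf]
        simp only
        rw [ind_of hQprop, ind_of ⟨hQprop.1, hPsub Q hQ⟩]
    _ ≤ anc D μ γ q c P := ENNReal.sum_le_tsum _

end GLam

-- chunk 6: the smallness (Carleson) estimate
namespace GLam

variable {n : ℕ} {D : Set (DyCube n)} {μ : Measure (Fin n → ℝ)} {γ q : ℝ}

theorem vol_ne_zero (P : DyCube n) : volume P.set ≠ 0 := by
  rw [vol_cube]
  simp only [ne_eq, ENNReal.ofReal_eq_zero, not_le]
  have := P.side_pos
  positivity

theorem vol_ne_top (P : DyCube n) : volume P.set ≠ ⊤ := by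
  rw [vol_cube]; exact ENNReal.ofReal_ne_top

/-- `α(R)^δ |R| = μ(R)^δ |R|^{1-δ(1-γ/n)}`. -/
theorem alpow_mul_vol {δ : ℝ} (hδ0 : 0 < δ) (R : DyCube n) :
    al μ γ R ^ δ * volume R.set = μ R.set ^ δ * volume R.set ^ (1 - δ * (1 - γ / (n : ℝ))) := by
  rw [al, ENNReal.div_rpow_of_nonneg _ _ hδ0.le, ← ENNReal.rpow_mul]
  rw [ENNReal.rpow_sub 1 (δ * (1 - γ / (n : ℝ))) (vol_ne_zero R) (vol_ne_top R), ENNReal.rpow_one]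
  rw [mul_comm (1 - γ / (n:ℝ)) δ]
  simp only [div_eq_mul_inv]
  ring

/-- The level-`k` Carleson sum estimate. -/
theorem level_sum (hγ0 : 0 < γ) (hγn : γ < n) {δ : ℝ} (hδ0 : 0 < δ) (hδ1 : δ ≤ 1)
    (P : DyCube n) (k : ℕ) :
    ∑ m : Fin n → Fin (2 ^ k), al μ γ (sc P k (fun i => (m i : ℕ))) ^ δ *
        volume (sc P k (fun i => (m i : ℕ))).set
      ≤ (ENNReal.ofReal ((2:ℝ) ^ (-(δ * γ)))) ^ k * (al μ γ P ^ δ * volume P.set) := by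
  have hn : (0:ℝ) < n := lt_trans hγ0 hγn
  have hs := P.side_pos
  set e : ℝ := 1 - δ * (1 - γ / (n : ℝ)) with he
  -- rewrite each term
  have hterm : ∀ m : Fin n → Fin (2 ^ k), al μ γ (sc P k (fun i => (m i : ℕ))) ^ δ *
      volume (sc P k (fun i => (m i : ℕ))).set
      = μ (sc P k (fun i => (m i : ℕ))).set ^ δ * ENNReal.ofReal ((P.side / 2 ^ k) ^ n) ^ e := by
    intro m
    rw [alpow_mul_vol hδ0, vol_sc]
  simp only [hterm]
  rw [← Finset.sum_mul]
  have hPM := pow_mean Finset.univ (fun m : Fin n → Fin (2 ^ k) =>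
    μ (sc P k (fun i => (m i : ℕ))).set) hδ0 hδ1
  rw [← meas_partition μ P k] at hPM
  have hcard : ((Finset.univ : Finset (Fin n → Fin (2 ^ k))).card : ℝ≥0∞)
      = ENNReal.ofReal (((2:ℝ) ^ k) ^ n) := by
    rw [Finset.card_univ, Fintype.card_fun]
    simp only [Fintype.card_fin]
    rw [← ENNReal.ofReal_natCast]
    congr 1
    push_cast
    ring
  rw [hcard] at hPM
  calc (∑ m : Fin n → Fin (2 ^ k), μ (sc P k (fun i => (m i : ℕ))).set ^ δ) *
        ENNReal.ofReal ((P.side / 2 ^ k) ^ n) ^ e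
      ≤ (ENNReal.ofReal (((2:ℝ) ^ k) ^ n) ^ (1 - δ) * μ P.set ^ δ) *
        ENNReal.ofReal ((P.side / 2 ^ k) ^ n) ^ e := by
        exact mul_le_mul_left hPM _
    _ = μ P.set ^ δ * (ENNReal.ofReal (((2:ℝ) ^ k) ^ n) ^ (1 - δ) *
        ENNReal.ofReal ((P.side / 2 ^ k) ^ n) ^ e) := by ring
    _ = μ P.set ^ δ * ((ENNReal.ofReal ((2:ℝ) ^ (-(δ * γ)))) ^ k *
        ENNReal.ofReal (P.side ^ n) ^ e) := by
        congr 1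
        -- pure computation with ofReal and rpow
        have hn0 : (n:ℝ) ≠ 0 := ne_of_gt hn
        have h1 : (0:ℝ) < ((2:ℝ) ^ k) ^ n := by positivity
        have h2 : (0:ℝ) < (P.side / 2 ^ k) ^ n := by positivity
        have h3 : (0:ℝ) < (2:ℝ) ^ (-(δ * γ)) := Real.rpow_pos_of_pos two_pos _
        have h4 : (0:ℝ) < P.side ^ n := by positivity
        have hreal : ((((2:ℝ) ^ k) ^ n) : ℝ) ^ (1 - δ) * ((P.side / 2 ^ k) ^ n) ^ e
            = ((2:ℝ) ^ (-(δ * γ))) ^ k * ((P.side ^ n) : ℝ) ^ e := by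
          have hL : (0:ℝ) < (((2:ℝ) ^ k) ^ n) ^ (1 - δ) * ((P.side / 2 ^ k) ^ n) ^ e := by
            positivity
          have hR : (0:ℝ) < ((2:ℝ) ^ (-(δ * γ))) ^ k * ((P.side ^ n) : ℝ) ^ e := by positivity
          rw [← Real.exp_log hL, ← Real.exp_log hR]
          congr 1
          rw [Real.log_mul (by positivity) (by positivity),
            Real.log_mul (by positivity) (by positivity),
            Real.log_rpow h1, Real.log_rpow h2, Real.log_rpow h4,
            Real.log_pow, Real.log_pow, Real.log_pow, Real.log_pow,
            Real.log_div (ne_of_gt hs) (by positivity), Real.log_pow,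
            Real.log_rpow two_pos]
          rw [he]
          field_simp
          simp only [Real.log_pow]
          ring
        rw [ENNReal.ofReal_rpow_of_pos h1, ENNReal.ofReal_rpow_of_pos h2,
          ← ENNReal.ofReal_mul (by positivity), hreal,
          ENNReal.ofReal_mul (by positivity), ENNReal.ofReal_pow h3.le,
          ENNReal.ofReal_rpow_of_pos h4]
    _ = (ENNReal.ofReal ((2:ℝ) ^ (-(δ * γ)))) ^ k * (al μ γ P ^ δ * volume P.set) := by
        rw [alpow_mul_vol hδ0, vol_cube]
        ring

end GLam

-- chunk 7: Carleson bound and Chebyshev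
namespace GLam

variable {n : ℕ} {D : Set (DyCube n)} {μ : Measure (Fin n → ℝ)} {γ q : ℝ}

/-- Geometric constant. -/
noncomputable def C0 (γ q : ℝ) : ℝ≥0∞ := (1 - ENNReal.ofReal ((2:ℝ) ^ (-(min q 1 * γ))))⁻¹

theorem eps_lt_one (hγ0 : 0 < γ) (hq : 0 < q) :
    ENNReal.ofReal ((2:ℝ) ^ (-(min q 1 * γ))) < 1 := by
  rw [← ENNReal.ofReal_one]
  apply (ENNReal.ofReal_lt_ofReal_iff one_pos).2
  apply Real.rpow_lt_one_of_one_lt_of_neg one_lt_two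
  have h1 : 0 < min q 1 := lt_min hq one_pos
  nlinarith

theorem C0_ne_top (hγ0 : 0 < γ) (hq : 0 < q) : C0 γ q ≠ ⊤ := by
  rw [C0]
  simp only [ne_eq, ENNReal.inv_eq_top, tsub_eq_zero_iff_le]
  exact fun h => absurd h (not_le.2 (eps_lt_one hγ0 hq))

theorem C0_ne_zero : C0 γ q ≠ 0 := by
  rw [C0]
  apply ENNReal.inv_ne_zero.2
  exact ne_top_of_le_ne_top ENNReal.one_ne_top tsub_le_self

/-- The Carleson sum estimate over all dyadic subcubes of `P`. -/
theorem carleson_bound (hγ0 : 0 < γ) (hγn : γ < n) (hq : 0 < q)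
    {ℓ : ℝ≥0∞} (hl0 : ℓ ≠ 0) (hltop : ℓ ≠ ⊤)
    {c : DyCube n → Prop} (hc : ∀ Q ∈ D, c Q → al μ γ Q ≤ ℓ)
    {P : DyCube n} (hP : al μ γ P ≤ ℓ) :
    (∑' Q : D, ind (c (Q : DyCube n) ∧ (Q : DyCube n).IsDyadicSub P)
        (be μ γ q (Q : DyCube n) * volume (Q : DyCube n).set))
      ≤ C0 γ q * (ℓ ^ q * volume P.set) := by
  set δ : ℝ := min q 1 with hδ
  have hδ0 : 0 < δ := lt_min hq one_pos
  have hδ1 : δ ≤ 1 := min_le_right _ _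
  have hδq : δ ≤ q := min_le_left _ _
  set eps : ℝ≥0∞ := ENNReal.ofReal ((2:ℝ) ^ (-(δ * γ))) with heps
  -- termwise estimate
  have step1 : (∑' Q : D, ind (c (Q : DyCube n) ∧ (Q : DyCube n).IsDyadicSub P)
        (be μ γ q (Q : DyCube n) * volume (Q : DyCube n).set))
      ≤ ℓ ^ (q - δ) * ∑' Q : D, ind ((Q : DyCube n).IsDyadicSub P)
        (al μ γ (Q : DyCube n) ^ δ * volume (Q : DyCube n).set) := by
    rw [← ENNReal.tsum_mul_left]
    apply ENNReal.tsum_le_tsum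
    intro Q
    rw [ind, ind, mul_ite, mul_zero]
    split
    · rename_i h
      rw [if_pos h.2, ← mul_assoc]
      apply mul_le_mul_left
      rw [be]
      rcases eq_or_ne (al μ γ (Q : DyCube n)) 0 with h0 | h0
      · rw [h0, ENNReal.zero_rpow_of_pos hq]
        exact zero_le
      · have htop' : al μ γ (Q : DyCube n) ≠ ⊤ :=
          ne_top_of_le_ne_top hltop (hc _ Q.2 h.1)
        calc al μ γ (Q : DyCube n) ^ q
            = al μ γ (Q : DyCube n) ^ (q - δ) * al μ γ (Q : DyCube n) ^ δ := by
              rw [← ENNReal.rpow_add _ _ h0 htop', sub_add_cancel]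
          _ ≤ ℓ ^ (q - δ) * al μ γ (Q : DyCube n) ^ δ :=
              mul_le_mul_left (ENNReal.rpow_le_rpow (hc _ Q.2 h.1) (by linarith)) _
    · exact zero_le
  -- key Carleson estimate for the δ-sum
  have step2 : (∑' Q : D, ind ((Q : DyCube n).IsDyadicSub P)
        (al μ γ (Q : DyCube n) ^ δ * volume (Q : DyCube n).set))
      ≤ C0 γ q * (al μ γ P ^ δ * volume P.set) := by
    set s : Set (↥D) := {Q : ↥D | (Q : DyCube n).IsDyadicSub P} with hsdef
    have hrw : (∑' Q : D, ind ((Q : DyCube n).IsDyadicSub P)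
        (al μ γ (Q : DyCube n) ^ δ * volume (Q : DyCube n).set))
        = ∑' x : ↥s, al μ γ ((x : ↥D) : DyCube n) ^ δ * volume ((x : ↥D) : DyCube n).set := by
      rw [tsum_subtype s (fun Q : ↥D => al μ γ (Q : DyCube n) ^ δ * volume (Q : DyCube n).set)]
      apply tsum_congr
      intro Q
      rw [Set.indicator_apply, ind]
      exact if_congr Iff.rfl rfl rfl
    rw [hrw]
    have hsel : ∀ x : ↥s, ∃ σ : Σ k : ℕ, (Fin n → Fin (2 ^ k)),
        ((x : ↥D) : DyCube n) = sc P σ.1 (fun i => (σ.2 i : ℕ)) := by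
      rintro ⟨⟨Q, hQD⟩, hQs⟩
      obtain ⟨k, m, hm, h⟩ := sub_iff.1 hQs
      exact ⟨⟨k, fun i => ⟨m i, hm i⟩⟩, h⟩
    choose ι hι using hsel
    have hinj : Function.Injective ι := by
      intro a b hab
      have ha := hι a
      rw [hab, ← hι b] at ha
      exact Subtype.ext (Subtype.ext ha)
    set F : (Σ k : ℕ, (Fin n → Fin (2 ^ k))) → ℝ≥0∞ := fun σ =>
      al μ γ (sc P σ.1 (fun i => (σ.2 i : ℕ))) ^ δ *
        volume (sc P σ.1 (fun i => (σ.2 i : ℕ))).set with hF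
    calc (∑' x : ↥s, al μ γ ((x : ↥D) : DyCube n) ^ δ * volume ((x : ↥D) : DyCube n).set)
        = ∑' x : ↥s, F (ι x) := by
          apply tsum_congr
          intro x
          rw [hF]
          simp only
          rw [← hι x]
      _ ≤ ∑' σ, F σ := ENNReal.tsum_comp_le_tsum_of_injective hinj F
      _ = ∑' k : ℕ, ∑' m : (Fin n → Fin (2 ^ k)), F ⟨k, m⟩ := ENNReal.tsum_sigma' _
      _ = ∑' k : ℕ, ∑ m : (Fin n → Fin (2 ^ k)), F ⟨k, m⟩ := by
          apply tsum_congr; intro k; exact tsum_fintype _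
      _ ≤ ∑' k : ℕ, eps ^ k * (al μ γ P ^ δ * volume P.set) := by
          apply ENNReal.tsum_le_tsum
          intro k
          exact level_sum hγ0 hγn hδ0 hδ1 P k
      _ = (∑' k : ℕ, eps ^ k) * (al μ γ P ^ δ * volume P.set) := ENNReal.tsum_mul_right
      _ = C0 γ q * (al μ γ P ^ δ * volume P.set) := by
          rw [ENNReal.tsum_geometric, C0, heps, hδ]
  calc (∑' Q : D, ind (c (Q : DyCube n) ∧ (Q : DyCube n).IsDyadicSub P)
        (be μ γ q (Q : DyCube n) * volume (Q : DyCube n).set))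
      ≤ ℓ ^ (q - δ) * (C0 γ q * (al μ γ P ^ δ * volume P.set)) :=
        le_trans step1 (mul_le_mul_right step2 _)
    _ ≤ ℓ ^ (q - δ) * (C0 γ q * (ℓ ^ δ * volume P.set)) := by
        apply mul_le_mul_right
        apply mul_le_mul_right
        exact mul_le_mul_left (ENNReal.rpow_le_rpow hP hδ0.le) _
    _ = C0 γ q * (ℓ ^ q * volume P.set) := by
        rw [← mul_assoc, mul_comm (ℓ ^ (q - δ)) (C0 γ q), mul_assoc, ← mul_assoc (ℓ ^ (q - δ)),
          ← ENNReal.rpow_add _ _ hl0 hltop, sub_add_cancel]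

theorem locS_measurable (hcnt : D.Countable) (c : DyCube n → Prop) :
    Measurable (locS D μ γ q c) := by
  haveI := hcnt.to_subtype
  apply Measurable.ennreal_tsum
  intro Q
  by_cases hc : c (Q : DyCube n)
  · have : (fun x => ind (c (Q : DyCube n) ∧ x ∈ (Q : DyCube n).set)
        (be μ γ q (Q : DyCube n)))
        = (Q : DyCube n).set.indicator (fun _ => be μ γ q (Q : DyCube n)) := by
      funext x
      rw [Set.indicator_apply, ind]
      simp [hc]
    rw [this]
    exact measurable_const.indicator (cube_measurable _)
  · have : (fun x => ind (c (Q : DyCube n) ∧ x ∈ (Q : DyCube n).set)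
        (be μ γ q (Q : DyCube n))) = fun _ => 0 := by
      funext x; simp [ind, hc]
    rw [this]
    exact measurable_const

theorem lintegral_locS (hcnt : D.Countable) (c : DyCube n → Prop) :
    ∫⁻ x, locS D μ γ q c x
      = ∑' Q : D, ind (c (Q : DyCube n))
          (be μ γ q (Q : DyCube n) * volume (Q : DyCube n).set) := by
  haveI := hcnt.to_subtype
  simp only [locS]
  have hrep : ∀ Q : ↥D, (fun x => ind (c (Q : DyCube n) ∧ x ∈ (Q : DyCube n).set)
      (be μ γ q (Q : DyCube n)))
      = (Q : DyCube n).set.indicator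
          (fun _ => ind (c (Q : DyCube n)) (be μ γ q (Q : DyCube n))) := by
    intro Q
    funext x
    rw [Set.indicator_apply, ind, ind]
    by_cases hc : c (Q : DyCube n) <;> by_cases hx : x ∈ (Q : DyCube n).set <;> simp [hc, hx]
  calc ∫⁻ x, ∑' Q : ↥D, ind (c (Q : DyCube n) ∧ x ∈ (Q : DyCube n).set)
        (be μ γ q (Q : DyCube n))
      = ∑' Q : ↥D, ∫⁻ x, ind (c (Q : DyCube n) ∧ x ∈ (Q : DyCube n).set)
          (be μ γ q (Q : DyCube n)) := by
        apply lintegral_tsum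
        intro Q
        rw [hrep Q]
        exact (measurable_const.indicator (cube_measurable _)).aemeasurable
    _ = ∑' Q : ↥D, ind (c (Q : DyCube n))
          (be μ γ q (Q : DyCube n) * volume (Q : DyCube n).set) := by
        apply tsum_congr
        intro Q
        rw [hrep Q, lintegral_indicator (cube_measurable _), setLIntegral_const, ind, ind]
        split
        · rfl
        · rw [zero_mul]

end GLam

-- chunk 8: stopping machinery
namespace GLam

variable {n : ℕ} {D : Set (DyCube n)} {μ : Measure (Fin n → ℝ)} {γ q : ℝ}

theorem level_inj {Q₀ : DyCube n} {a b : ℕ} (h : Q₀.side / 2 ^ a = Q₀.side / 2 ^ b) : a = b := by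
  have hs := Q₀.side_pos
  rw [div_eq_div_iff (by positivity) (by positivity)] at h
  have h2 : (2:ℝ) ^ b = 2 ^ a := by
    have h3 := mul_left_cancel₀ (ne_of_gt hs) h
    exact h3
  by_contra hne
  rcases Nat.lt_or_ge a b with hab | hab
  · have := pow_lt_pow_right₀ (a := (2:ℝ)) one_lt_two hab
    linarith
  · have hab' : b < a := by omega
    have := pow_lt_pow_right₀ (a := (2:ℝ)) one_lt_two hab'
    linarith

/-- Every element of a family of dyadic subcubes of `Q₀` lies below a maximal one. -/
theorem exists_maximal {Q₀ : DyCube n} (A : Set (DyCube n)) (hA : ∀ P ∈ A, P.IsDyadicSub Q₀) :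
    ∀ P ∈ A, ∃ Pm ∈ A, P.IsDyadicSub Pm ∧ ∀ R ∈ A, Pm.IsDyadicSub R → Pm = R := by
  suffices H : ∀ k : ℕ, ∀ P ∈ A, P.side = Q₀.side / 2 ^ k →
      ∃ Pm ∈ A, P.IsDyadicSub Pm ∧ ∀ R ∈ A, Pm.IsDyadicSub R → Pm = R by
    intro P hP
    obtain ⟨k, m, hm, hs, -⟩ := hA P hP
    exact H k P hP hs
  intro k
  induction k using Nat.strong_induction_on with
  | _ k IH =>
    intro P hP hPk
    by_cases hmax : ∀ R ∈ A, P.IsDyadicSub R → P = R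
    · exact ⟨P, hP, sub_refl P, hmax⟩
    · push_neg at hmax
      obtain ⟨R, hR, hPR, hne⟩ := hmax
      obtain ⟨k', m', hm', hs', -⟩ := hA R hR
      obtain ⟨j, mj, hmj, hsj, -⟩ := id hPR
      have hj : j ≠ 0 := by
        rintro rfl
        exact hne (eq_of_sub_of_side hPR (by rw [hsj]; simp))
      have hkk' : k = k' + j := by
        apply level_inj (Q₀ := Q₀)
        rw [← hPk, hsj, hs', div_div, ← pow_add]
      obtain ⟨Pm, hPm, hRPm, hmaxPm⟩ := IH k' (by omega) R hR hs'
      exact ⟨Pm, hPm, sub_trans hPR hRPm, hmaxPm⟩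

theorem subs_countable (Q₀ : DyCube n) : {P : DyCube n | P.IsDyadicSub Q₀}.Countable := by
  rw [← Set.countable_coe_iff]
  have hsel : ∀ P : {P : DyCube n | P.IsDyadicSub Q₀}, ∃ σ : ℕ × (Fin n → ℕ),
      (P : DyCube n) = sc Q₀ σ.1 σ.2 := by
    rintro ⟨P, hP⟩
    obtain ⟨k, m, hm, h⟩ := sub_iff.1 hP
    exact ⟨(k, m), h⟩
  choose F hF using hsel
  have hinj : Function.Injective F := by
    intro a b hab
    have := hF a
    rw [hab, ← hF b] at this
    exact Subtype.ext this
  exact hinj.countable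

/-- Strict-ancestor sums are dominated by the ancestor sum of a parent cube. -/
theorem sanc_le_anc {c : DyCube n → Prop} {P Q' : DyCube n}
    (hcQ' : c Q') (hPQ' : P.IsDyadicSub Q') (hneQ' : P ≠ Q')
    (hcommon : ∀ Q ∈ D, c Q → ∃ T : DyCube n, Q'.IsDyadicSub T ∧ Q.IsDyadicSub T) :
    ∃ par : DyCube n, par.side = 2 * P.side ∧ P.IsDyadicSub par ∧ P ≠ par ∧
      par.IsDyadicSub Q' ∧
      (∑' Q : D, ind (c (Q : DyCube n) ∧ P.IsDyadicSub (Q : DyCube n) ∧ P ≠ (Q : DyCube n))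
          (be μ γ q (Q : DyCube n)))
        ≤ anc D μ γ q c par := by
  obtain ⟨par, hside, hsub, hne', hparQ'⟩ := exists_parent hPQ' hneQ'
  refine ⟨par, hside, hsub, hne', hparQ', ?_⟩
  apply ENNReal.tsum_le_tsum
  intro Q
  rw [ind, ind]
  split
  · rename_i h
    obtain ⟨hcQ, hPQ, hPneQ⟩ := h
    obtain ⟨T, hQ'T, hQT⟩ := hcommon _ Q.2 hcQ
    obtain ⟨par2, hside2, hsub2, hne2, hpar2Q⟩ := exists_parent hPQ hPneQ
    obtain ⟨y, hy⟩ := set_nonempty P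
    have hpar_eq : par = par2 := by
      apply eq_of_sub_of_side
      · apply sub_of_inter_side_le (sub_trans hparQ' hQ'T) (sub_trans hpar2Q hQT)
          ⟨y, sub_set_subset hsub hy, sub_set_subset hsub2 hy⟩ (by rw [hside, hside2])
      · rw [hside, hside2]
    rw [if_pos ⟨hcQ, hpar_eq ▸ hpar2Q⟩]
  · exact zero_le

/-- The halving estimate. -/
theorem halving (hγ0 : 0 < γ) (hγn : γ < n) (hq : 0 < q) (hD : IsDyadicLattice D)
    {Q₀ : DyCube n} (hQ₀D : Q₀ ∈ D) {G : Set (Fin n → ℝ)} {ℓ : ℝ≥0∞} (hl0 : ℓ ≠ 0)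
    (hltop : ℓ ≠ ⊤)
    (hG : ∀ Q ∈ D, (Q.set ∩ G).Nonempty → al μ γ Q ≤ ℓ) :
    ∀ m : ℕ, volume {x | x ∈ Q₀.set ∧
        (m : ℝ≥0∞) * (2 * C0 γ q * ℓ ^ q) < locS D μ γ q
          (fun Q => (Q.set ∩ G).Nonempty ∧ Q.IsDyadicSub Q₀) x}
      ≤ 2⁻¹ ^ m * volume Q₀.set := by
  have hcnt := lattice_countable hD
  set t : ℝ≥0∞ := 2 * C0 γ q * ℓ ^ q with htdef
  have hlq0 : ℓ ^ q ≠ 0 := by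
    intro h
    rcases ENNReal.rpow_eq_zero_iff.1 h with ⟨h1, -⟩ | ⟨h1, -⟩
    · exact hl0 h1
    · exact hltop h1
  have hlqtop : ℓ ^ q ≠ ⊤ := by
    intro h
    rcases ENNReal.rpow_eq_top_iff.1 h with ⟨h1, -⟩ | ⟨h1, -⟩
    · exact hl0 h1
    · exact hltop h1
  have ht0 : t ≠ 0 := by
    rw [htdef]
    exact mul_ne_zero (mul_ne_zero two_ne_zero C0_ne_zero) hlq0
  have httop : t ≠ ⊤ := by
    rw [htdef]
    exact ENNReal.mul_ne_top (ENNReal.mul_ne_top ENNReal.ofNat_ne_top (C0_ne_top hγ0 hq)) hlqtop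
  set gp : DyCube n → Prop := fun Q => (Q.set ∩ G).Nonempty ∧ Q.IsDyadicSub Q₀ with hgp
  set W : ℕ → Set (Fin n → ℝ) := fun m =>
    {x | x ∈ Q₀.set ∧ (m : ℝ≥0∞) * t < locS D μ γ q gp x} with hW
  -- the one-step halving
  have hstep : ∀ m : ℕ, volume (W (m + 1)) ≤ 2⁻¹ * volume (W m) := by
    intro m
    set A : Set (DyCube n) :=
      {P | P.IsDyadicSub Q₀ ∧ (m : ℝ≥0∞) * t < anc D μ γ q gp P} with hA
    set MM : Set (DyCube n) := {P ∈ A | ∀ R ∈ A, P.IsDyadicSub R → P = R} with hMM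
    have hMMc : MM.Countable := (subs_countable Q₀).mono (fun P hP => hP.1.1)
    have hMMsub : ∀ P ∈ MM, P.IsDyadicSub Q₀ := fun P hP => hP.1.1
    -- coverage
    have hcover : W (m + 1) ⊆ ⋃ P ∈ MM,
        (P.set ∩ {x | t ≤ locS D μ γ q (fun Q => gp Q ∧ Q.IsDyadicSub P) x}) := by
      intro x hx
      obtain ⟨hxQ₀, hxval⟩ := hx
      have hmt : (m : ℝ≥0∞) * t < locS D μ γ q gp x := by
        refine lt_of_le_of_lt ?_ hxval
        apply mul_le_mul_left
        exact_mod_cast Nat.cast_le.2 (Nat.le_succ m)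
      have hnest1 : ∀ Q ∈ D, ∀ Q' ∈ D, gp Q → gp Q' → x ∈ Q.set → x ∈ Q'.set →
          Q.IsDyadicSub Q' ∨ Q'.IsDyadicSub Q := by
        intro Q hQ Q' hQ' hgpQ hgpQ' hxQ hxQ'
        exact nested_of_inter hgpQ.2 hgpQ'.2 ⟨x, hxQ, hxQ'⟩
      obtain ⟨P₁, hP₁D, hxP₁, hgpP₁, hancP₁⟩ := exists_anc_gt hnest1 hmt
      have hP₁A : P₁ ∈ A := ⟨hgpP₁.2, hancP₁⟩
      obtain ⟨Pm, hPmA, hP₁Pm, hPmmax⟩ := exists_maximal A (fun P hP => hP.1) P₁ hP₁A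
      have hxPm : x ∈ Pm.set := sub_set_subset hP₁Pm hxP₁
      have hPmMM : Pm ∈ MM := ⟨hPmA, hPmmax⟩
      -- decompose
      have hnest2 : ∀ Q ∈ D, gp Q → x ∈ Q.set →
          Q.IsDyadicSub Pm ∨ (Pm.IsDyadicSub Q ∧ Pm ≠ Q) := by
        intro Q hQD hgpQ hxQ
        rcases nested_of_inter hgpQ.2 hPmA.1 ⟨x, hxQ, hxPm⟩ with h | h
        · exact Or.inl h
        · by_cases h' : Q.IsDyadicSub Pm
          · exact Or.inl h'
          · exact Or.inr ⟨h, fun he => h' (he ▸ sub_refl Pm)⟩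
      have hdec := locS_decomp (μ := μ) (γ := γ) (q := q) hxPm (P := Pm) (c := gp) hnest2
      -- bound the strict ancestor part
      have hsanc : (∑' Q : D, ind (gp (Q : DyCube n) ∧ Pm.IsDyadicSub (Q : DyCube n) ∧
            Pm ≠ (Q : DyCube n)) (be μ γ q (Q : DyCube n)))
          ≤ (m : ℝ≥0∞) * t := by
        by_cases hex : ∃ Q : D, gp (Q : DyCube n) ∧ Pm.IsDyadicSub (Q : DyCube n) ∧
            Pm ≠ (Q : DyCube n)
        · obtain ⟨Q', hgpQ', hsubQ', hneQ'⟩ := hex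
          obtain ⟨par, hpside, hpsub, hpne, hparQ', hple⟩ :=
            sanc_le_anc (D := D) (μ := μ) (γ := γ) (q := q) hgpQ' hsubQ' hneQ'
              (fun Q hQ hgpQ => ⟨Q₀, hgpQ'.2, hgpQ.2⟩)
          refine le_trans hple ?_
          by_contra hgt
          push_neg at hgt
          have hparA : par ∈ A := ⟨sub_trans hparQ' hgpQ'.2, hgt⟩
          exact hpne (hPmmax par hparA hpsub)
        · have : (∑' Q : D, ind (gp (Q : DyCube n) ∧ Pm.IsDyadicSub (Q : DyCube n) ∧
              Pm ≠ (Q : DyCube n)) (be μ γ q (Q : DyCube n))) = 0 := by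
            rw [ENNReal.tsum_eq_zero]
            intro Q
            apply ind_eq_zero
            intro hcon
            exact hex ⟨Q, hcon⟩
          rw [this]
          exact zero_le
      -- conclude t < local sum at Pm
      have hmt_ne : (m : ℝ≥0∞) * t ≠ ⊤ := ENNReal.mul_ne_top (ENNReal.natCast_ne_top m) httop
      have hlt : t < locS D μ γ q (fun Q => gp Q ∧ Q.IsDyadicSub Pm) x := by
        have h1 : ((m + 1 : ℕ) : ℝ≥0∞) * t = t + (m : ℝ≥0∞) * t := by
          push_cast
          ring
        rw [hdec, h1] at hxval
        have h2 : t + (m : ℝ≥0∞) * t <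
            locS D μ γ q (fun Q => gp Q ∧ Q.IsDyadicSub Pm) x + (m : ℝ≥0∞) * t :=
          lt_of_lt_of_le hxval (add_le_add_right hsanc _)
        exact (ENNReal.add_lt_add_iff_right hmt_ne).1 h2
      exact Set.mem_biUnion hPmMM ⟨hxPm, le_of_lt hlt⟩
    -- disjointness
    have hdisj : MM.PairwiseDisjoint DyCube.set := by
      intro P hP P' hP' hne
      rw [Function.onFun]
      by_contra hnd
      obtain ⟨x, hx1, hx2⟩ := Set.not_disjoint_iff.1 hnd
      rcases nested_of_inter hP.1.1 hP'.1.1 ⟨x, hx1, hx2⟩ with h | h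
      · exact hne (hP.2 P' hP'.1 h)
      · exact hne (hP'.2 P hP.1 h).symm
    -- per-cube estimate
    have hper : ∀ P ∈ MM,
        volume (P.set ∩ {x | t ≤ locS D μ γ q (fun Q => gp Q ∧ Q.IsDyadicSub P) x})
          ≤ 2⁻¹ * volume P.set := by
      intro P hP
      have hPD : P ∈ D := hD.1 Q₀ hQ₀D P (hMMsub P hP)
      by_cases hPG : (P.set ∩ G).Nonempty
      · calc volume (P.set ∩ {x | t ≤ locS D μ γ q (fun Q => gp Q ∧ Q.IsDyadicSub P) x})
            ≤ volume {x | t ≤ locS D μ γ q (fun Q => gp Q ∧ Q.IsDyadicSub P) x} :=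
              measure_mono Set.inter_subset_right
          _ ≤ (∫⁻ x, locS D μ γ q (fun Q => gp Q ∧ Q.IsDyadicSub P) x) / t :=
              meas_ge_le_lintegral_div ((locS_measurable hcnt _).aemeasurable) ht0 httop
          _ ≤ (C0 γ q * (ℓ ^ q * volume P.set)) / t := by
              apply ENNReal.div_le_div_right
              rw [lintegral_locS hcnt]
              exact carleson_bound (c := gp) hγ0 hγn hq hl0 hltop
                (fun Q hQD hQ => hG Q hQD (And.left hQ)) (hG P hPD hPG)
          _ = 2⁻¹ * volume P.set := by
              have hkey : C0 γ q * (ℓ ^ q * volume P.set) = (2⁻¹ * volume P.set) * t := by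
                rw [htdef]
                rw [show (2⁻¹ : ℝ≥0∞) * volume P.set * (2 * C0 γ q * ℓ ^ q)
                  = (2⁻¹ * 2) * (C0 γ q * (ℓ ^ q * volume P.set)) by ring]
                rw [ENNReal.inv_mul_cancel two_ne_zero ENNReal.ofNat_ne_top, one_mul]
              rw [hkey, mul_div_assoc, ENNReal.div_self ht0 httop, mul_one]
      · have hempty : (P.set ∩ {x | t ≤ locS D μ γ q (fun Q => gp Q ∧ Q.IsDyadicSub P) x}) = ∅ := by
          rw [Set.eq_empty_iff_forall_notMem]
          rintro x ⟨hxP, hxt⟩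
          have hzero : locS D μ γ q (fun Q => gp Q ∧ Q.IsDyadicSub P) x = 0 := by
            rw [locS, ENNReal.tsum_eq_zero]
            intro Q
            apply ind_eq_zero
            rintro ⟨⟨hgpQ, hQP⟩, -⟩
            obtain ⟨y, hy1, hy2⟩ := hgpQ.1
            exact hPG ⟨y, sub_set_subset hQP hy1, hy2⟩
          simp only [Set.mem_setOf_eq] at hxt
          rw [hzero] at hxt
          exact ht0 (le_antisymm hxt (zero_le : (0:ℝ≥0∞) ≤ t))
        rw [hempty]
        simp
    calc volume (W (m + 1))
        ≤ volume (⋃ P ∈ MM,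
            (P.set ∩ {x | t ≤ locS D μ γ q (fun Q => gp Q ∧ Q.IsDyadicSub P) x})) :=
          measure_mono hcover
      _ ≤ ∑' P : MM, volume ((P : DyCube n).set ∩
            {x | t ≤ locS D μ γ q (fun Q => gp Q ∧ Q.IsDyadicSub (P : DyCube n)) x}) :=
          measure_biUnion_le volume hMMc _
      _ ≤ ∑' P : MM, 2⁻¹ * volume (P : DyCube n).set :=
          ENNReal.tsum_le_tsum (fun P => hper _ P.2)
      _ = 2⁻¹ * ∑' P : MM, volume (P : DyCube n).set := ENNReal.tsum_mul_left
      _ = 2⁻¹ * volume (⋃ P ∈ MM, P.set) := by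
          rw [measure_biUnion hMMc hdisj (fun P _ => cube_measurable P)]
      _ ≤ 2⁻¹ * volume (W m) := by
          apply mul_le_mul_right
          apply measure_mono
          intro y hy
          rw [Set.mem_iUnion₂] at hy
          obtain ⟨P, hPMM, hyP⟩ := hy
          exact ⟨sub_set_subset (hMMsub P hPMM) hyP,
            lt_of_lt_of_le hPMM.1.2 (anc_le_locS hyP)⟩
  -- induction
  intro m
  induction m with
  | zero =>
    simp only [pow_zero, one_mul]
    exact measure_mono (fun x hx => hx.1)
  | succ m IH =>
    calc volume (W (m + 1)) ≤ 2⁻¹ * volume (W m) := hstep m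
      _ ≤ 2⁻¹ * (2⁻¹ ^ m * volume Q₀.set) := mul_le_mul_right IH _
      _ = 2⁻¹ ^ (m + 1) * volume Q₀.set := by rw [pow_succ]; ring

end GLam

-- chunk 9: main theorem
namespace GLam

variable {n : ℕ} {D : Set (DyCube n)} {μ : Measure (Fin n → ℝ)} {γ q : ℝ}

theorem side_double {P R : DyCube n} (h : P.IsDyadicSub R) (hne : P ≠ R) :
    2 * P.side ≤ R.side := by
  obtain ⟨k, m, hm, hs, -⟩ := id h
  have hk : k ≠ 0 := by
    rintro rfl
    exact hne (eq_of_sub_of_side h (by rw [hs]; simp))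
  have hR := R.side_pos
  have h2 : (2:ℝ) ≤ 2 ^ k := by
    calc (2:ℝ) = 2 ^ 1 := (pow_one 2).symm
      _ ≤ 2 ^ k := pow_le_pow_right₀ one_le_two (by omega)
  rw [hs]
  rw [mul_div_assoc']
  rw [div_le_iff₀ (by positivity)]
  nlinarith

end GLam

theorem stmt15' (n : ℕ) (γ q : ℝ) (hγ0 : 0 < γ) (hγn : γ < n) (hq : 0 < q) :
    ∃ C₁ C₂ : ℝ, 0 < C₁ ∧ 0 < C₂ ∧
      ∀ (μ : Measure (Fin n → ℝ)) (D : Set (DyCube n)), IsDyadicLattice D →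
        ∀ lam ε : ℝ, 0 < lam → ε ∈ Set.Ioo (0 : ℝ) 1 →
          volume {x | ENNReal.ofReal (2 * lam) < dyadicPot D μ γ q x ∧
              dyadicFracM D μ γ x ≤ ENNReal.ofReal (ε * lam)} ≤
            ENNReal.ofReal (C₁ * Real.exp (-C₂ / ε ^ q)) *
              volume {x | ENNReal.ofReal lam < dyadicPot D μ γ q x} := by
  classical
  have hδ0 : 0 < min q 1 := lt_min hq one_pos
  have h2q : (1:ℝ) < 2 ^ q := (Real.one_lt_rpow_iff_of_pos two_pos).2 (Or.inl ⟨one_lt_two, hq⟩)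
  set a : ℝ := (2:ℝ) ^ (-(min q 1 * γ)) with hadef
  have ha0 : 0 < a := Real.rpow_pos_of_pos two_pos _
  have ha1 : a < 1 := Real.rpow_lt_one_of_one_lt_of_neg one_lt_two (by nlinarith)
  set c0r : ℝ := (1 - a)⁻¹ with hc0rdef
  have hc0r : 0 < c0r := inv_pos.2 (by linarith)
  set K : ℝ := (2 ^ q - 1) / (2 * c0r) with hKdef
  have hK : 0 < K := div_pos (by linarith) (by linarith)
  refine ⟨2, K * Real.log 2, two_pos, mul_pos hK (Real.log_pos one_lt_two), ?_⟩
  intro μ D hD lam ε hlam hε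
  obtain ⟨hε0, hε1⟩ := hε
  have hC0eq : GLam.C0 γ q = ENNReal.ofReal c0r := by
    rw [GLam.C0, hc0rdef, ENNReal.ofReal_inv_of_pos (by linarith)]
    congr 1
    rw [ENNReal.ofReal_sub _ ha0.le, ENNReal.ofReal_one]
  set ℓ : ℝ≥0∞ := ENNReal.ofReal (ε * lam) with hldef
  have hεlam : 0 < ε * lam := mul_pos hε0 hlam
  have hl0 : ℓ ≠ 0 := by
    rw [hldef]
    simp only [ne_eq, ENNReal.ofReal_eq_zero, not_le]
    exact hεlam
  have hltop : ℓ ≠ ⊤ := ENNReal.ofReal_ne_top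
  set G : Set (Fin n → ℝ) := {y | dyadicFracM D μ γ y ≤ ℓ} with hGdef
  set S : (Fin n → ℝ) → ℝ≥0∞ := GLam.locS D μ γ q (fun _ => True) with hSdef
  have hpotiff : ∀ (r : ℝ≥0∞) x, r < dyadicPot D μ γ q x ↔ r ^ q < S x := by
    intro r x
    rw [GLam.pot_eq]
    constructor
    · intro h
      have h2 := ENNReal.rpow_lt_rpow h hq
      rwa [← ENNReal.rpow_mul, one_div, inv_mul_cancel₀ (ne_of_gt hq), ENNReal.rpow_one] at h2
    · intro h
      have h2 := ENNReal.rpow_lt_rpow h (by positivity : (0:ℝ) < 1 / q)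
      rwa [← ENNReal.rpow_mul, mul_one_div, div_self (ne_of_gt hq), ENNReal.rpow_one] at h2
  set τ : ℝ≥0∞ := (ENNReal.ofReal lam) ^ q with hτdef
  have hlam' : (0:ℝ≥0∞) < ENNReal.ofReal lam := ENNReal.ofReal_pos.2 hlam
  have hτ0 : τ ≠ 0 := by
    rw [hτdef]
    intro h
    rcases ENNReal.rpow_eq_zero_iff.1 h with ⟨h1, -⟩ | ⟨h1, -⟩
    · exact (ne_of_gt hlam') h1
    · exact ENNReal.ofReal_ne_top h1
  have hτtop : τ ≠ ⊤ := by
    rw [hτdef]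
    intro h
    rcases ENNReal.rpow_eq_top_iff.1 h with ⟨h1, -⟩ | ⟨h1, -⟩
    · exact (ne_of_gt hlam') h1
    · exact ENNReal.ofReal_ne_top h1
  have hτpos : 0 < τ := pos_iff_ne_zero.2 hτ0
  have hEeq : {x | ENNReal.ofReal (2 * lam) < dyadicPot D μ γ q x ∧
      dyadicFracM D μ γ x ≤ ℓ}
      = {x | (ENNReal.ofReal (2 * lam)) ^ q < S x ∧ x ∈ G} := by
    ext x
    simp only [Set.mem_setOf_eq, hGdef, hpotiff]
  have hΩeq : {x | ENNReal.ofReal lam < dyadicPot D μ γ q x} = {x | τ < S x} := by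
    ext x
    simp only [Set.mem_setOf_eq, hτdef, hpotiff]
  rw [hEeq, hΩeq]
  set E : Set (Fin n → ℝ) := {x | (ENNReal.ofReal (2 * lam)) ^ q < S x ∧ x ∈ G} with hEdef
  set Ω : Set (Fin n → ℝ) := {x | τ < S x} with hΩdef
  have hτ_lt : τ < (ENNReal.ofReal (2 * lam)) ^ q := by
    rw [hτdef]
    exact ENNReal.rpow_lt_rpow ((ENNReal.ofReal_lt_ofReal_iff (by linarith)).2 (by linarith)) hq
  set Ag : Set (DyCube n) := {P | τ < GLam.anc D μ γ q (fun _ => True) P} with hAgdef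
  have hAgD : ∀ P ∈ Ag, P ∈ D := by
    intro P hP
    by_contra hPD
    have h1 : GLam.anc D μ γ q (fun _ => True) P ≠ 0 := (lt_of_le_of_lt (zero_le : (0:ℝ≥0∞) ≤ τ) hP).ne'
    apply h1
    rw [GLam.anc, ENNReal.tsum_eq_zero]
    intro Q
    apply GLam.ind_eq_zero
    rintro ⟨-, hsub⟩
    exact hPD (hD.1 Q Q.2 P hsub)
  have hAgsub : ∀ P ∈ Ag, P.set ⊆ Ω := by
    intro P hP y hy
    exact lt_of_lt_of_le hP (GLam.anc_le_locS hy)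
  have hcoef0 : ENNReal.ofReal (2 * Real.exp (-(K * Real.log 2) / ε ^ q)) ≠ 0 := by
    simp only [ne_eq, ENNReal.ofReal_eq_zero, not_le]
    positivity
  by_cases hmax : ∀ P ∈ Ag, ∃ Pm ∈ Ag, P.IsDyadicSub Pm ∧ ∀ R ∈ Ag, Pm.IsDyadicSub R → Pm = R
  swap
  · -- no maximal cube: Ω has infinite volume
    push_neg at hmax
    obtain ⟨P₀, hP₀Ag, hP₀no⟩ := hmax
    have key : ∀ P, P ∈ Ag → (∀ Pm ∈ Ag, P.IsDyadicSub Pm →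
          ∃ R ∈ Ag, Pm.IsDyadicSub R ∧ Pm ≠ R) →
        ∃ P', (P' ∈ Ag ∧ ∀ Pm ∈ Ag, P'.IsDyadicSub Pm →
          ∃ R ∈ Ag, Pm.IsDyadicSub R ∧ Pm ≠ R) ∧ 2 * P.side ≤ P'.side := by
      intro P hP hno
      obtain ⟨R, hRAg, hPR, hPneR⟩ := hno P hP (GLam.sub_refl P)
      refine ⟨R, ⟨hRAg, ?_⟩, GLam.side_double hPR hPneR⟩
      intro Pm hPm hRPm
      exact hno Pm hPm (GLam.sub_trans hPR hRPm)
    have hΩtop : volume Ω = ⊤ := by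
      set T := {P : DyCube n // P ∈ Ag ∧ ∀ Pm ∈ Ag, P.IsDyadicSub Pm →
          ∃ R ∈ Ag, Pm.IsDyadicSub R ∧ Pm ≠ R} with hT
      have key' : ∀ x : T, ∃ y : T, 2 * x.1.side ≤ y.1.side := by
        rintro ⟨P, hP1, hP2⟩
        obtain ⟨P', hP', hs⟩ := key P hP1 hP2
        exact ⟨⟨P', hP'⟩, hs⟩
      choose g hg using key'
      set f : ℕ → T := fun j => g^[j] ⟨P₀, hP₀Ag, hP₀no⟩ with hfdef
      have hside : ∀ j : ℕ, (2:ℝ) ^ j * P₀.side ≤ (f j).1.side := by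
        intro j
        induction j with
        | zero => simp [hfdef]
        | succ j IH =>
          have hstep : f (j + 1) = g (f j) := by
            rw [hfdef]
            exact Function.iterate_succ_apply' g (j) _
          rw [hstep]
          calc (2:ℝ) ^ (j + 1) * P₀.side = 2 * ((2:ℝ) ^ j * P₀.side) := by ring
            _ ≤ 2 * (f j).1.side := by linarith
            _ ≤ (g (f j)).1.side := hg (f j)
      by_contra htop
      have hs0 := P₀.side_pos
      have hb : ∀ j : ℕ, ((2:ℝ) ^ j * P₀.side) ^ n ≤ (volume Ω).toReal := by
        intro j
        have h1 : ENNReal.ofReal (((f j).1.side) ^ n) ≤ volume Ω := by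
          rw [← GLam.vol_cube]
          exact measure_mono (hAgsub _ (f j).2.1)
        have h2 : ((2:ℝ) ^ j * P₀.side) ^ n ≤ ((f j).1.side) ^ n := by
          apply pow_le_pow_left₀ (by positivity) (hside j)
        exact le_trans h2 ((ENNReal.ofReal_le_iff_le_toReal htop).1 h1)
      have hn1 : 1 ≤ n := by
        have : (0:ℝ) < n := lt_trans hγ0 hγn
        exact_mod_cast Nat.one_le_iff_ne_zero.2 (by exact_mod_cast this.ne')
      obtain ⟨j, hj⟩ := pow_unbounded_of_one_lt ((volume Ω).toReal / P₀.side ^ n) one_lt_two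
      have hsn : (0:ℝ) < P₀.side ^ n := by positivity
      rw [div_lt_iff₀ hsn] at hj
      have h3 : (2:ℝ) ^ j * P₀.side ^ n ≤ ((2:ℝ) ^ j * P₀.side) ^ n := by
        rw [mul_pow]
        apply mul_le_mul_of_nonneg_right _ hsn.le
        calc (2:ℝ) ^ j = ((2:ℝ) ^ j) ^ 1 := (pow_one _).symm
          _ ≤ ((2:ℝ) ^ j) ^ n := pow_le_pow_right₀ (one_le_pow₀ one_le_two) hn1
      have := hb j
      linarith
    rw [hΩtop, ENNReal.mul_top hcoef0]
    exact le_top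
  · -- main case
    set QQ : Set (DyCube n) := {P | P ∈ Ag ∧ ∀ R ∈ Ag, P.IsDyadicSub R → P = R} with hQQdef
    have hQQD : ∀ P ∈ QQ, P ∈ D := fun P hP => hAgD P hP.1
    have hQQc : QQ.Countable := (GLam.lattice_countable hD).mono hQQD
    have hQQdisj : QQ.PairwiseDisjoint DyCube.set := by
      intro P hP P' hP' hne
      rw [Function.onFun]
      by_contra hnd
      obtain ⟨x, hx1, hx2⟩ := Set.not_disjoint_iff.1 hnd
      obtain ⟨Rc, hRcD, h1, h2⟩ := hD.2.1 P (hQQD P hP) P' (hQQD P' hP')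
      rcases GLam.nested_of_inter h1 h2 ⟨x, hx1, hx2⟩ with h | h
      · exact hne (hP.2 P' hP'.1 h)
      · exact hne (hP'.2 P hP.1 h).symm
    have hcover : E ⊆ ⋃ P ∈ QQ, (E ∩ P.set) := by
      intro x hx
      have hxS : τ < S x := lt_trans hτ_lt hx.1
      have hnest : ∀ Q ∈ D, ∀ Q' ∈ D, True → True → x ∈ Q.set → x ∈ Q'.set →
          Q.IsDyadicSub Q' ∨ Q'.IsDyadicSub Q := by
        intro Q hQ Q' hQ' _ _ hxQ hxQ'
        obtain ⟨Rc, hRcD, h1, h2⟩ := hD.2.1 Q hQ Q' hQ'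
        exact GLam.nested_of_inter h1 h2 ⟨x, hxQ, hxQ'⟩
      obtain ⟨P₁, hP₁D, hxP₁, -, hanc⟩ := GLam.exists_anc_gt (c := fun _ => True) hnest hxS
      obtain ⟨Pm, hPmAg, hsub, hmaxPm⟩ := hmax P₁ hanc
      exact Set.mem_biUnion (⟨hPmAg, hmaxPm⟩ : Pm ∈ QQ) ⟨hx, GLam.sub_set_subset hsub hxP₁⟩
    have hG : ∀ Q ∈ D, (DyCube.set Q ∩ G).Nonempty → GLam.al μ γ Q ≤ ℓ := by
      rintro Q hQD ⟨y, hyQ, hyG⟩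
      exact le_trans (GLam.al_le_M hQD hyQ) hyG
    set m' : ℕ := ⌊K / ε ^ q⌋₊ with hm'def
    have hεq : (0:ℝ) < ε ^ q := Real.rpow_pos_of_pos hε0 q
    -- the key arithmetic inequality
    have hKA : (m' : ℝ≥0∞) * (2 * GLam.C0 γ q * ℓ ^ q) + τ ≤ (ENNReal.ofReal (2 * lam)) ^ q := by
      rw [hC0eq, hldef, hτdef]
      rw [ENNReal.ofReal_rpow_of_pos hεlam, ENNReal.ofReal_rpow_of_pos hlam,
        ENNReal.ofReal_rpow_of_pos (by linarith)]
      rw [show (2:ℝ≥0∞) = ENNReal.ofReal 2 by simp]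
      rw [← ENNReal.ofReal_natCast m']
      rw [← ENNReal.ofReal_mul (by norm_num), ← ENNReal.ofReal_mul (by positivity),
        ← ENNReal.ofReal_mul (by positivity), ← ENNReal.ofReal_add (by positivity) (by positivity)]
      apply ENNReal.ofReal_le_ofReal
      have hfl : (m' : ℝ) ≤ K / ε ^ q := Nat.floor_le (by positivity)
      have hrw1 : (ε * lam) ^ q = ε ^ q * lam ^ q := Real.mul_rpow hε0.le hlam.le
      have hrw2 : (2 * lam) ^ q = 2 ^ q * lam ^ q := Real.mul_rpow (by norm_num) hlam.le
      rw [hrw1, hrw2]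
      have hlamq : (0:ℝ) < lam ^ q := Real.rpow_pos_of_pos hlam q
      have hKey : (m' : ℝ) * (2 * c0r * ε ^ q) ≤ 2 ^ q - 1 := by
        calc (m' : ℝ) * (2 * c0r * ε ^ q) ≤ (K / ε ^ q) * (2 * c0r * ε ^ q) := by
              apply mul_le_mul_of_nonneg_right hfl (by positivity)
          _ = K * (2 * c0r) := by field_simp
          _ = 2 ^ q - 1 := by rw [hKdef]; field_simp
      nlinarith
    have hper : ∀ Q₀ ∈ QQ, volume (E ∩ Q₀.set) ≤ 2⁻¹ ^ m' * volume Q₀.set := by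
      intro Q₀ hQ₀
      have hQ₀D := hQQD Q₀ hQ₀
      have hhalv := GLam.halving (μ := μ) hγ0 hγn hq hD hQ₀D hl0 hltop hG m'
      refine le_trans (measure_mono ?_) hhalv
      rintro x ⟨⟨hxT, hxG⟩, hxQ₀⟩
      refine ⟨hxQ₀, ?_⟩
      have hSx : S x = GLam.locS D μ γ q (fun Q => (DyCube.set Q ∩ G).Nonempty) x := by
        rw [hSdef]
        apply tsum_congr
        intro Q
        by_cases hxQ : x ∈ (Q : DyCube n).set
        · rw [GLam.ind_of ⟨trivial, hxQ⟩, GLam.ind_of ⟨⟨x, hxQ, hxG⟩, hxQ⟩]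
        · rw [GLam.ind_not_of (fun h => hxQ h.2), GLam.ind_not_of (fun h => hxQ h.2)]
      have hnest2 : ∀ Q ∈ D, (DyCube.set Q ∩ G).Nonempty → x ∈ Q.set →
          Q.IsDyadicSub Q₀ ∨ (Q₀.IsDyadicSub Q ∧ Q₀ ≠ Q) := by
        intro Q hQD _ hxQ
        obtain ⟨Rc, hRcD, h1, h2⟩ := hD.2.1 Q hQD Q₀ hQ₀D
        rcases GLam.nested_of_inter h1 h2 ⟨x, hxQ, hxQ₀⟩ with h | h
        · exact Or.inl h
        · by_cases h' : Q.IsDyadicSub Q₀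
          · exact Or.inl h'
          · exact Or.inr ⟨h, fun he => h' (he ▸ GLam.sub_refl Q₀)⟩
      have hdec := GLam.locS_decomp (μ := μ) (γ := γ) (q := q)
        (c := fun Q => (DyCube.set Q ∩ G).Nonempty) hxQ₀ hnest2
      have hsanc : (∑' Q : D, GLam.ind (((DyCube.set (Q : DyCube n)) ∩ G).Nonempty ∧
            Q₀.IsDyadicSub (Q : DyCube n) ∧ Q₀ ≠ (Q : DyCube n))
            (GLam.be μ γ q (Q : DyCube n))) ≤ τ := by
        by_cases hex : ∃ Q : D, ((DyCube.set (Q : DyCube n)) ∩ G).Nonempty ∧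
            Q₀.IsDyadicSub (Q : DyCube n) ∧ Q₀ ≠ (Q : DyCube n)
        · obtain ⟨Q', h1, h2, h3⟩ := hex
          have hcommon : ∀ Q ∈ D, (DyCube.set Q ∩ G).Nonempty →
              ∃ Tc : DyCube n, ((Q' : DyCube n)).IsDyadicSub Tc ∧ Q.IsDyadicSub Tc := by
            intro Q hQD _
            obtain ⟨Tc, hTcD, hA, hB⟩ := hD.2.1 (Q' : DyCube n) Q'.2 Q hQD
            exact ⟨Tc, hA, hB⟩
          obtain ⟨par, hpside, hpsub, hpne, hparQ', hple⟩ :=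
            GLam.sanc_le_anc (D := D) (μ := μ) (γ := γ) (q := q) h1 h2 h3 hcommon
          refine le_trans hple ?_
          have hancmono : GLam.anc D μ γ q (fun Q => (DyCube.set Q ∩ G).Nonempty) par ≤
              GLam.anc D μ γ q (fun _ => True) par :=
            ENNReal.tsum_le_tsum (fun Q => GLam.ind_le_ind (fun h => ⟨trivial, h.2⟩) le_rfl)
          refine le_trans hancmono ?_
          by_contra hgt
          push_neg at hgt
          exact hpne (hQ₀.2 par hgt hpsub)
        · have hzero : (∑' Q : D, GLam.ind (((DyCube.set (Q : DyCube n)) ∩ G).Nonempty ∧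
              Q₀.IsDyadicSub (Q : DyCube n) ∧ Q₀ ≠ (Q : DyCube n))
              (GLam.be μ γ q (Q : DyCube n))) = 0 := by
            rw [ENNReal.tsum_eq_zero]
            intro Q
            exact GLam.ind_eq_zero (fun hcon => hex ⟨Q, hcon⟩)
          rw [hzero]
          exact (zero_le : (0:ℝ≥0∞) ≤ τ)
      rw [hSx, hdec] at hxT
      have h5 : (m' : ℝ≥0∞) * (2 * GLam.C0 γ q * ℓ ^ q) + τ <
          GLam.locS D μ γ q
            (fun Q => (DyCube.set Q ∩ G).Nonempty ∧ Q.IsDyadicSub Q₀) x + τ :=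
        lt_of_le_of_lt hKA (lt_of_lt_of_le hxT (add_le_add_right hsanc _))
      exact (ENNReal.add_lt_add_iff_right hτtop).1 h5
    have hfinal : (2⁻¹ : ℝ≥0∞) ^ m' ≤
        ENNReal.ofReal (2 * Real.exp (-(K * Real.log 2) / ε ^ q)) := by
      have h2inv : (2⁻¹ : ℝ≥0∞) = ENNReal.ofReal ((2:ℝ)⁻¹) := by
        rw [ENNReal.ofReal_inv_of_pos two_pos]
        norm_num
      rw [h2inv, ← ENNReal.ofReal_pow (by norm_num)]
      apply ENNReal.ofReal_le_ofReal
      have hm'lb : K / ε ^ q < m' + 1 := Nat.lt_floor_add_one _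
      have hlog2 : 0 < Real.log 2 := Real.log_pos one_lt_two
      have hlogrw : ((2:ℝ)⁻¹) ^ m' = Real.exp (-((m' : ℝ) * Real.log 2)) := by
        rw [← Real.exp_log (by positivity : (0:ℝ) < ((2:ℝ)⁻¹) ^ m')]
        congr 1
        rw [Real.log_pow, Real.log_inv]
        push_cast
        ring
      rw [hlogrw]
      rw [show (2:ℝ) * Real.exp (-(K * Real.log 2) / ε ^ q)
        = Real.exp (Real.log 2 + -(K * Real.log 2) / ε ^ q) by
          rw [Real.exp_add, Real.exp_log two_pos]]
      apply Real.exp_le_exp.2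
      have h6 : K / ε ^ q - 1 ≤ (m' : ℝ) := by linarith
      calc -((m' : ℝ) * Real.log 2) ≤ -((K / ε ^ q - 1) * Real.log 2) := by nlinarith
        _ = Real.log 2 + -(K * Real.log 2) / ε ^ q := by field_simp; ring
    calc volume E ≤ volume (⋃ P ∈ QQ, (E ∩ P.set)) := measure_mono hcover
      _ ≤ ∑' P : QQ, volume (E ∩ (P : DyCube n).set) := measure_biUnion_le volume hQQc _
      _ ≤ ∑' P : QQ, 2⁻¹ ^ m' * volume (P : DyCube n).set :=
          ENNReal.tsum_le_tsum (fun P => hper _ P.2)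
      _ = 2⁻¹ ^ m' * ∑' P : QQ, volume (P : DyCube n).set := ENNReal.tsum_mul_left
      _ = 2⁻¹ ^ m' * volume (⋃ P ∈ QQ, DyCube.set P) := by
          rw [measure_biUnion hQQc hQQdisj (fun P _ => GLam.cube_measurable P)]
      _ ≤ 2⁻¹ ^ m' * volume Ω := by
          apply mul_le_mul_right
          apply measure_mono
          intro y hy
          rw [Set.mem_iUnion₂] at hy
          obtain ⟨P, hPQQ, hyP⟩ := hy
          exact hAgsub P hPQQ.1 hyP
      _ ≤ ENNReal.ofReal (2 * Real.exp (-(K * Real.log 2) / ε ^ q)) * volume Ω :=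
          mul_le_mul_left hfinal _

/-- Exponential good-λ inequality for the nonlinear dyadic potential: there are
`C₁, C₂ > 0` (depending on `n, γ, q`) such that for every nonnegative Borel measure `μ`,
dyadic lattice `𝒟`, `λ > 0` and `ε ∈ (0,1)`:
`|{T_{q,γ}(μ) > 2λ, M_γ(μ) ≤ ελ}| ≤ C₁ e^{−C₂/ε^q} |{T_{q,γ}(μ) > λ}|`. -/
theorem stmt15 (n : ℕ) (γ q : ℝ) (hγ0 : 0 < γ) (hγn : γ < n) (hq : 0 < q) :
    ∃ C₁ C₂ : ℝ, 0 < C₁ ∧ 0 < C₂ ∧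
      ∀ (μ : Measure (Fin n → ℝ)) (D : Set (DyCube n)), IsDyadicLattice D →
        ∀ lam ε : ℝ, 0 < lam → ε ∈ Set.Ioo (0 : ℝ) 1 →
          volume {x | ENNReal.ofReal (2 * lam) < dyadicPot D μ γ q x ∧
              dyadicFracM D μ γ x ≤ ENNReal.ofReal (ε * lam)} ≤
            ENNReal.ofReal (C₁ * Real.exp (-C₂ / ε ^ q)) *
              volume {x | ENNReal.ofReal lam < dyadicPot D μ γ q x} := by
  exact stmt15' n γ q hγ0 hγn hq
end
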